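/- arXiv:2511.14176 — 3 statements merged into one kernel-verified Lean document; each statement's English description precedes it below -/
import Mathlib

section
/- Let L and R be finite sets of 2-element subsets of [n] and M a finite set of 3-element subsets of [n]. Suppose: (LR) there are no {l₁<l₂} ∈ L and {r₁<r₂} ∈ R with r₁ < l₁ < r₂ < l₂; (LMR) there are no {v₁<v₂} ∈ L ∪ R and {w₁<w₂<w₃} ∈ M with w₁ < v₁ < w₂ < v₂ < w₃; (MM) no two triangles {v₁<v₂<v₃}, {w₁<w₂<w₃} ∈ M satisfy v₁<w₁<v₂<w₂<v₃<w₃. Let V ⊆ [n] with |V| ≥ 3 be such that each edge of the convex polygon P = conv(V) (with vertices on the moment curve γ₂) satisfies conditions (Le), (Me), (Re). Then there exists a triangulation T of P with vertex set V such that every edge of T satisfies (Le), (Me) and (Re). -/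
open Finset

/-- The moment curve in `ℝ^d`: `γ_d(s) = (s, s², …, s^d)`. -/
def momentCurve (d : ℕ) (s : ℝ) : Fin d → ℝ := fun i => s ^ (i.1 + 1)

/-- The convex hull in `ℝ^d` of the points `γ_d(t i)` for `i ∈ σ`. -/
def mcConv (d : ℕ) {n : ℕ} (t : Fin n → ℝ) (σ : Finset (Fin n)) : Set (Fin d → ℝ) :=
  convexHull ℝ ((fun i => momentCurve d (t i)) '' ↑σ)

/-- Two simplices (given by index sets) overlap in `ℝ^d`:
`conv(σ) ∩ conv(τ) ⊋ conv(σ ∩ τ)`. -/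
def Overlap (d : ℕ) {n : ℕ} (t : Fin n → ℝ) (σ τ : Finset (Fin n)) : Prop :=
  ¬ (mcConv d t σ ∩ mcConv d t τ ⊆ mcConv d t (σ ∩ τ))

/-- Projection `ℝ^{d+1} → ℝ^d` forgetting the last coordinate. -/
def projLast (d : ℕ) (x : Fin (d + 1) → ℝ) : Fin d → ℝ := fun i => x i.castSucc

/-- `h_σ ≤ h_τ` on `conv(σ) ∩ conv(τ)`, phrased via the liftings to `γ_{d+1}`:
any point of the lifted `σ`-simplex lying above a point of the lifted `τ`-simplex
(same projection) has smaller or equal last coordinate. -/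
def HeightLE (d : ℕ) {n : ℕ} (t : Fin n → ℝ) (σ τ : Finset (Fin n)) : Prop :=
  ∀ q ∈ mcConv (d + 1) t σ, ∀ q' ∈ mcConv (d + 1) t τ,
    projLast d q = projLast d q' → q (Fin.last d) ≤ q' (Fin.last d)

/-- `σ <_{d+1} τ`: `σ` and `τ` overlap in `ℝ^d` and `h_σ ≤ h_τ` on the common domain. -/
def HeightLT (d : ℕ) {n : ℕ} (t : Fin n → ℝ) (σ τ : Finset (Fin n)) : Prop :=
  Overlap d t σ τ ∧ HeightLE d t σ τ

/-- A triangulation of `conv(A)` without new vertices: a family of `d`-simplices with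
vertices in `A`, pairwise non-overlapping, whose convex hulls cover `conv(A)`. -/
def IsTriangulation (d : ℕ) {n : ℕ} (t : Fin n → ℝ) (A : Finset (Fin n))
    (T : Finset (Finset (Fin n))) : Prop :=
  (∀ σ ∈ T, σ.card = d + 1 ∧ σ ⊆ A) ∧
  (∀ σ ∈ T, ∀ τ ∈ T, σ ≠ τ → ¬ Overlap d t σ τ) ∧
  (∀ p ∈ mcConv d t A, ∃ σ ∈ T, p ∈ mcConv d t σ)

/-- The triangulation `T` uses every vertex of `A`. -/
def UsesAllVertices {n : ℕ} (A : Finset (Fin n)) (T : Finset (Finset (Fin n))) : Prop :=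
  ∀ a ∈ A, ∃ σ ∈ T, a ∈ σ

/-- `σ` is a face of the triangulation `T`. -/
def IsFaceOf {n : ℕ} (σ : Finset (Fin n)) (T : Finset (Finset (Fin n))) : Prop :=
  ∃ ρ ∈ T, σ ⊆ ρ

/-- An alternating sequence `v₁ < ⋯ < v_k` of type (σ): odd-numbered entries
(0-indexed even positions) in `σ`, even-numbered entries in `τ`. -/
def AltSeq {n : ℕ} (σ τ : Finset (Fin n)) (k : ℕ) : Prop :=
  ∃ v : Fin k → Fin n, StrictMono v ∧
    ∀ i : Fin k, (i.1 % 2 = 0 → v i ∈ σ) ∧ (i.1 % 2 = 1 → v i ∈ τ)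

/-- `σ` and `τ` are `k`-interlacing. -/
def Interlacing {n : ℕ} (σ τ : Finset (Fin n)) (k : ℕ) : Prop :=
  AltSeq σ τ k ∨ AltSeq τ σ k

/-- `σ ≤_{d+1} T`: the height of `σ` is at most that of `T` on `conv(σ)`. -/
def SimplexLE (d : ℕ) {n : ℕ} (t : Fin n → ℝ) (σ : Finset (Fin n))
    (T : Finset (Finset (Fin n))) : Prop :=
  ∀ τ ∈ T, HeightLE d t σ τ

/-- `T ≤_{d+1} σ`: the height of `T` is at most that of `σ` on `conv(σ)`. -/
def TriLE (d : ℕ) {n : ℕ} (t : Fin n → ℝ) (T : Finset (Finset (Fin n)))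
    (σ : Finset (Fin n)) : Prop :=
  ∀ τ ∈ T, HeightLE d t τ σ

/-- Condition (Le) for the pair `v₁ < v₂` with respect to the edge set `L`:
there is no `{l₁ < l₂} ∈ L` with `v₁ < l₁ < v₂ < l₂`. -/
def CondLe {n : ℕ} (L : Finset (Finset (Fin n))) (v₁ v₂ : Fin n) : Prop :=
  ¬ ∃ l₁ l₂ : Fin n, ({l₁, l₂} : Finset (Fin n)) ∈ L ∧ l₁ < l₂ ∧
      v₁ < l₁ ∧ l₁ < v₂ ∧ v₂ < l₂

/-- Condition (Me) for the pair `v₁ < v₂` with respect to the triangle set `M`: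
there is no `{w₁ < w₂ < w₃} ∈ M` with `w₁ < v₁ < w₂ < v₂ < w₃`. -/
def CondMe {n : ℕ} (M : Finset (Finset (Fin n))) (v₁ v₂ : Fin n) : Prop :=
  ¬ ∃ w₁ w₂ w₃ : Fin n, ({w₁, w₂, w₃} : Finset (Fin n)) ∈ M ∧ w₁ < w₂ ∧ w₂ < w₃ ∧
      w₁ < v₁ ∧ v₁ < w₂ ∧ w₂ < v₂ ∧ v₂ < w₃

/-- Condition (Re) for the pair `v₁ < v₂` with respect to the edge set `R`:
there is no `{r₁ < r₂} ∈ R` with `r₁ < v₁ < r₂ < v₂`. -/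
def CondRe {n : ℕ} (R : Finset (Finset (Fin n))) (v₁ v₂ : Fin n) : Prop :=
  ¬ ∃ r₁ r₂ : Fin n, ({r₁, r₂} : Finset (Fin n)) ∈ R ∧ r₁ < r₂ ∧
      r₁ < v₁ ∧ v₁ < r₂ ∧ r₂ < v₂

/-- `{a, b}` (with `a < b`) is an edge of the convex polygon spanned by `V ⊆ [n]`
(points in convex position on `γ₂`, ordered by index): either `a` and `b` are
consecutive in `V`, or they are the minimum and maximum of `V`. -/
def PolygonEdge {n : ℕ} (V : Finset (Fin n)) (a b : Fin n) : Prop :=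
  a ∈ V ∧ b ∈ V ∧ a < b ∧
    ((∀ c ∈ V, ¬ (a < c ∧ c < b)) ∨ (∀ c ∈ V, a ≤ c ∧ c ≤ b))

namespace MCAux

variable {n : ℕ}

/-- The point on the moment curve in the plane associated to index `i`. -/
def mcPt (t : Fin n → ℝ) (i : Fin n) : Fin 2 → ℝ := momentCurve 2 (t i)

lemma mcPt_zero (t : Fin n → ℝ) (i : Fin n) : mcPt t i 0 = t i := by
  simp [mcPt, momentCurve]

lemma mcPt_one (t : Fin n → ℝ) (i : Fin n) : mcPt t i 1 = t i ^ 2 := by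
  simp [mcPt, momentCurve]

lemma mcConv_eq (t : Fin n → ℝ) (σ : Finset (Fin n)) :
    mcConv 2 t σ = convexHull ℝ (↑(σ.image (mcPt t)) : Set (Fin 2 → ℝ)) := by
  rw [mcConv, Finset.coe_image]
  rfl

lemma mcConv_mono (t : Fin n → ℝ) {σ τ : Finset (Fin n)} (h : σ ⊆ τ) :
    mcConv 2 t σ ⊆ mcConv 2 t τ :=
  convexHull_mono (Set.image_mono (by exact_mod_cast h))

lemma mcPt_mem (t : Fin n → ℝ) {σ : Finset (Fin n)} {i : Fin n} (h : i ∈ σ) :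
    mcPt t i ∈ mcConv 2 t σ :=
  subset_convexHull ℝ _ ⟨i, by exact_mod_cast h, rfl⟩

/-- The affine functional whose zero set is the line through `γ₂ α` and `γ₂ β`. -/
def lfun (α β : ℝ) (x : Fin 2 → ℝ) : ℝ := x 1 - (α + β) * x 0 + α * β

lemma lfun_mcPt (t : Fin n → ℝ) (α β : ℝ) (i : Fin n) :
    lfun α β (mcPt t i) = (t i - α) * (t i - β) := by
  simp only [lfun, mcPt_zero, mcPt_one]; ring

lemma lfun_comb (α β c₁ c₂ : ℝ) (x y : Fin 2 → ℝ) (h : c₁ + c₂ = 1) :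
    lfun α β (c₁ • x + c₂ • y) = c₁ * lfun α β x + c₂ * lfun α β y := by
  simp only [lfun, Pi.add_apply, Pi.smul_apply, smul_eq_mul]
  have : c₂ = 1 - c₁ := by linarith
  subst this; ring

/-- Sign bound on the convex hull from sign bounds at the generating points. -/
lemma hull_sign (t : Fin n → ℝ) (α β ε : ℝ) {σ : Finset (Fin n)}
    (h : ∀ i ∈ σ, ε * lfun α β (mcPt t i) ≤ 0) :
    ∀ p ∈ mcConv 2 t σ, ε * lfun α β p ≤ 0 := by
  have hconv : Convex ℝ {x : Fin 2 → ℝ | ε * lfun α β x ≤ 0} := by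
    intro x hx y hy c₁ c₂ hc₁ hc₂ hsum
    simp only [Set.mem_setOf_eq] at *
    rw [lfun_comb α β c₁ c₂ x y hsum, mul_add, mul_comm ε (c₁ * _), mul_assoc,
      mul_comm ε (c₂ * _), mul_assoc]
    have h1 : c₁ * (ε * lfun α β x) ≤ 0 := mul_nonpos_of_nonneg_of_nonpos hc₁ hx
    have h2 : c₂ * (ε * lfun α β y) ≤ 0 := mul_nonpos_of_nonneg_of_nonpos hc₂ hy
    linarith
  intro p hp
  have : mcConv 2 t σ ⊆ {x : Fin 2 → ℝ | ε * lfun α β x ≤ 0} := by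
    rw [mcConv]
    apply convexHull_min _ hconv
    rintro x ⟨i, hi, rfl⟩
    exact h i (by exact_mod_cast hi)
  exact this hp

/-- Every point of the hull lies above the parabola. -/
lemma hull_parabola (t : Fin n → ℝ) {σ : Finset (Fin n)} :
    ∀ p ∈ mcConv 2 t σ, p 0 ^ 2 ≤ p 1 := by
  have hconv : Convex ℝ {x : Fin 2 → ℝ | x 0 ^ 2 ≤ x 1} := by
    intro x hx y hy c₁ c₂ hc₁ hc₂ hsum
    simp only [Set.mem_setOf_eq, Pi.add_apply, Pi.smul_apply, smul_eq_mul] at *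
    nlinarith [mul_nonneg (mul_nonneg hc₁ hc₂) (sq_nonneg (x 0 - y 0)),
      mul_le_mul_of_nonneg_left hx hc₁, mul_le_mul_of_nonneg_left hy hc₂]
  intro p hp
  have : mcConv 2 t σ ⊆ {x : Fin 2 → ℝ | x 0 ^ 2 ≤ x 1} := by
    rw [mcConv]
    apply convexHull_min _ hconv
    rintro x ⟨i, hi, rfl⟩
    simp [momentCurve]
  exact this hp

/-- A point above the parabola on the line through `γ₂ (t a)`, `γ₂ (t b)` is on the segment. -/
lemma line_mem_pair (t : Fin n → ℝ) {a b : Fin n} (hab : t a < t b) {p : Fin 2 → ℝ}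
    (h0 : lfun (t a) (t b) p = 0) (hpar : p 0 ^ 2 ≤ p 1) :
    p ∈ mcConv 2 t ({a, b} : Finset (Fin n)) := by
  set x := p 0 with hx
  have h1 : p 1 = (t a + t b) * x - t a * t b := by
    simp only [lfun] at h0; linarith
  have hprod : (x - t a) * (x - t b) ≤ 0 := by nlinarith
  have hax : t a ≤ x := by
    by_contra hlt
    push_neg at hlt
    nlinarith
  have hxb : x ≤ t b := by
    by_contra hlt
    push_neg at hlt
    nlinarith
  set θ : ℝ := (x - t a) / (t b - t a) with hθ
  have hba : (0:ℝ) < t b - t a := by linarith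
  have hθ0 : 0 ≤ θ := div_nonneg (by linarith) hba.le
  have hθ1 : θ ≤ 1 := by
    rw [hθ, div_le_one hba]; linarith
  have hc0 : (1 - θ) * mcPt t a 0 + θ * mcPt t b 0 = p 0 := by
    simp only [mcPt_zero]
    rw [hθ]; field_simp; rw [← hx]; ring
  have hc1 : (1 - θ) * mcPt t a 1 + θ * mcPt t b 1 = p 1 := by
    simp only [mcPt_one]
    rw [h1, hθ]; field_simp; ring
  have hmem : p ∈ segment ℝ (mcPt t a) (mcPt t b) := by
    refine ⟨1 - θ, θ, by linarith, hθ0, by ring, ?_⟩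
    funext i
    have hi : i = 0 ∨ i = 1 := by omega
    rcases hi with rfl | rfl <;>
      simpa only [Pi.add_apply, Pi.smul_apply, smul_eq_mul] using (by assumption)
  have hsub : segment ℝ (mcPt t a) (mcPt t b) ⊆ mcConv 2 t ({a, b} : Finset (Fin n)) := by
    apply segment_subset_convexHull
    · exact ⟨a, by simp, rfl⟩
    · exact ⟨b, by simp, rfl⟩
  exact hsub hmem


/-- If a point of the hull lies on the line `lfun = 0`, it lies in the hull of the
vertices lying on that line (which can only be `a`, `b`). -/
lemma hull_zero_support (t : Fin n → ℝ) (ht : StrictMono t) {a b : Fin n} (ε : ℝ) (hε : ε ≠ 0)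
    {σ : Finset (Fin n)} (hsign : ∀ i ∈ σ, ε * lfun (t a) (t b) (mcPt t i) ≤ 0)
    {p : Fin 2 → ℝ} (hp : p ∈ mcConv 2 t σ) (h0 : lfun (t a) (t b) p = 0) :
    p ∈ mcConv 2 t (σ ∩ {a, b}) := by
  set A := t a with hA
  set B := t b with hB
  rw [mcConv_eq, Finset.convexHull_eq] at hp
  obtain ⟨w, hw0, hw1, hwc⟩ := hp
  set s := σ.image (mcPt t) with hs
  have hpsum : ∑ y ∈ s, w y • y = p := by
    rw [← hwc, Finset.centerMass, hw1]; simp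
  have hp0 : p 0 = ∑ y ∈ s, w y * y 0 := by
    rw [← hpsum, Finset.sum_apply]; simp
  have hp1 : p 1 = ∑ y ∈ s, w y * y 1 := by
    rw [← hpsum, Finset.sum_apply]; simp
  have hterm : ∀ y ∈ s, w y * (ε * lfun A B y)
      = ε * (w y * y 1) - (ε * (A + B)) * (w y * y 0) + (ε * (A * B)) * w y := by
    intro y _; simp only [lfun]; ring
  have hsum0 : ∑ y ∈ s, w y * (ε * lfun A B y) = 0 := by
    rw [Finset.sum_congr rfl hterm, Finset.sum_add_distrib, Finset.sum_sub_distrib,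
      ← Finset.mul_sum, ← Finset.mul_sum, ← Finset.mul_sum, ← hp1, ← hp0, hw1]
    have : lfun A B p = 0 := h0
    simp only [lfun] at this
    linear_combination ε * this
  have hnonpos : ∀ y ∈ s, w y * (ε * lfun A B y) ≤ 0 := by
    intro y hy
    obtain ⟨i, hi, rfl⟩ := Finset.mem_image.1 hy
    exact mul_nonpos_of_nonneg_of_nonpos (hw0 _ hy) (hsign i hi)
  have hzero : ∀ y ∈ s, w y * (ε * lfun A B y) = 0 :=
    (Finset.sum_eq_zero_iff_of_nonpos hnonpos).1 hsum0
  set s₀ := s.filter (fun y => lfun A B y = 0) with hs₀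
  have hwz : ∀ y ∈ s, y ∉ s₀ → w y = 0 := by
    intro y hy hyn
    have hln : lfun A B y ≠ 0 := by
      intro hl; exact hyn (Finset.mem_filter.2 ⟨hy, hl⟩)
    have := hzero y hy
    rcases mul_eq_zero.1 this with h | h
    · exact h
    · exact absurd (by rcases mul_eq_zero.1 h with h' | h'; exact absurd h' hε; exact h') hln
  have hW : ∑ y ∈ s₀, w y = 1 := by
    rw [← hw1, eq_comm]
    rw [← Finset.sum_filter_add_sum_filter_not s (fun y => lfun A B y = 0)]
    have : ∑ y ∈ s.filter (fun y => ¬ lfun A B y = 0), w y = 0 := by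
      apply Finset.sum_eq_zero
      intro y hy
      have hys := Finset.mem_filter.1 hy
      exact hwz y hys.1 (by simp [hs₀, Finset.mem_filter, hys.2])
    rw [this, add_zero]
  have hpc : ∑ y ∈ s₀, w y • y = p := by
    rw [← hpsum, eq_comm]
    rw [← Finset.sum_filter_add_sum_filter_not s (fun y => lfun A B y = 0)]
    have : ∑ y ∈ s.filter (fun y => ¬ lfun A B y = 0), w y • y = 0 := by
      apply Finset.sum_eq_zero
      intro y hy
      have hys := Finset.mem_filter.1 hy
      rw [hwz y hys.1 (by simp [hs₀, Finset.mem_filter, hys.2]), zero_smul]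
    rw [this, add_zero]
  have hmem : p ∈ convexHull ℝ (↑s₀ : Set (Fin 2 → ℝ)) := by
    rw [Finset.convexHull_eq]
    exact ⟨w, fun y hy => hw0 y (Finset.mem_filter.1 hy).1, hW, by
      rw [Finset.centerMass, hW]; simpa using hpc⟩
  have hsub : (↑s₀ : Set (Fin 2 → ℝ)) ⊆ (fun i => momentCurve 2 (t i)) '' ↑(σ ∩ ({a, b} : Finset (Fin n))) := by
    intro y hy
    obtain ⟨hys, hyl⟩ := Finset.mem_filter.1 hy
    obtain ⟨i, hi, rfl⟩ := Finset.mem_image.1 hys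
    rw [lfun_mcPt] at hyl
    have : i = a ∨ i = b := by
      rcases mul_eq_zero.1 hyl with h | h
      · exact Or.inl (ht.injective (by rw [hA] at h; linarith))
      · exact Or.inr (ht.injective (by rw [hB] at h; linarith))
    exact ⟨i, by simp [Finset.mem_inter, hi, this], rfl⟩
  exact (convexHull_mono hsub) hmem

lemma mcPt_inj (t : Fin n → ℝ) (ht : StrictMono t) {c c' : Fin n}
    (h : mcPt t c = mcPt t c') : c = c' := by
  have := congrFun h 0
  rw [mcPt_zero, mcPt_zero] at this
  exact ht.injective this

lemma classify (t : Fin n → ℝ) {a b : Fin n} {S : Finset (Fin n)}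
    (hS : S ⊆ {a, b}) {p : Fin 2 → ℝ} (hp : p ∈ mcConv 2 t S) :
    (∃ c ∈ S, p = mcPt t c) ∨ (a ∈ S ∧ b ∈ S) := by
  by_cases ha : a ∈ S
  · by_cases hb : b ∈ S
    · exact Or.inr ⟨ha, hb⟩
    · left
      have hSb : S ⊆ {a} := by
        intro i hi
        rcases Finset.mem_insert.1 (hS hi) with h | h
        · simp [h]
        · simp only [Finset.mem_singleton] at h; subst h; exact absurd hi hb
      rcases Finset.subset_singleton_iff.1 hSb with rfl | rfl
      · simp [mcConv] at hp
      · refine ⟨a, by simp, ?_⟩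
        rw [mcConv] at hp
        simp only [Finset.coe_singleton, Set.image_singleton, convexHull_singleton,
          Set.mem_singleton_iff] at hp
        exact hp
  · left
    have hSb : S ⊆ {b} := by
      intro i hi
      rcases Finset.mem_insert.1 (hS hi) with h | h
      · subst h; exact absurd hi ha
      · exact h
    rcases Finset.subset_singleton_iff.1 hSb with rfl | rfl
    · simp [mcConv] at hp
    · refine ⟨b, by simp, ?_⟩
      rw [mcConv] at hp
      simp only [Finset.coe_singleton, Set.image_singleton, convexHull_singleton,
        Set.mem_singleton_iff] at hp
      exact hp

/-- Key non-overlap lemma: simplices on the two sides of the line through `a`, `b`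
meet only inside their common face. -/
lemma cross_nonoverlap (t : Fin n → ℝ) (ht : StrictMono t) {a b : Fin n} (hab : a < b)
    {σ τ : Finset (Fin n)}
    (hσ : ∀ i ∈ σ, lfun (t a) (t b) (mcPt t i) ≤ 0)
    (hτ : ∀ i ∈ τ, 0 ≤ lfun (t a) (t b) (mcPt t i)) :
    mcConv 2 t σ ∩ mcConv 2 t τ ⊆ mcConv 2 t (σ ∩ τ) := by
  rintro p ⟨hpσ, hpτ⟩
  have h1 : lfun (t a) (t b) p ≤ 0 := by
    have := hull_sign t (t a) (t b) 1 (by intro i hi; simpa using hσ i hi) p hpσ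
    linarith
  have h2 : 0 ≤ lfun (t a) (t b) p := by
    have := hull_sign t (t a) (t b) (-1) (by intro i hi; have := hτ i hi; nlinarith) p hpτ
    linarith
  have h0 : lfun (t a) (t b) p = 0 := le_antisymm h1 h2
  have hpa : p ∈ mcConv 2 t (σ ∩ {a, b}) :=
    hull_zero_support t ht 1 one_ne_zero (by intro i hi; simpa using hσ i hi) hpσ h0
  have hpb : p ∈ mcConv 2 t (τ ∩ {a, b}) :=
    hull_zero_support t ht (-1) (by norm_num) (by intro i hi; have := hτ i hi; nlinarith) hpτ h0
  have hsa : (σ ∩ ({a,b} : Finset (Fin n))) ⊆ {a, b} := Finset.inter_subset_right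
  have hsb : (τ ∩ ({a,b} : Finset (Fin n))) ⊆ {a, b} := Finset.inter_subset_right
  rcases classify t hsa hpa with ⟨c, hc, rfl⟩ | ⟨haσ, hbσ⟩
  · have hcσ : c ∈ σ := (Finset.mem_inter.1 hc).1
    rcases classify t hsb hpb with ⟨c', hc', he⟩ | ⟨haτ, hbτ⟩
    · have : c = c' := mcPt_inj t ht he
      subst this
      exact mcPt_mem t (Finset.mem_inter.2 ⟨hcσ, (Finset.mem_inter.1 hc').1⟩)
    · have hcab : c ∈ ({a, b} : Finset (Fin n)) := (Finset.mem_inter.1 hc).2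
      have hcτ : c ∈ τ := by
        rcases Finset.mem_insert.1 hcab with h | h
        · subst h; exact (Finset.mem_inter.1 haτ).1
        · simp only [Finset.mem_singleton] at h; subst h; exact (Finset.mem_inter.1 hbτ).1
      exact mcPt_mem t (Finset.mem_inter.2 ⟨hcσ, hcτ⟩)
  · rcases classify t hsb hpb with ⟨c', hc', rfl⟩ | ⟨haτ, hbτ⟩
    · have hcτ : c' ∈ τ := (Finset.mem_inter.1 hc').1
      have hcab : c' ∈ ({a, b} : Finset (Fin n)) := (Finset.mem_inter.1 hc').2
      have hcσ : c' ∈ σ := by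
        rcases Finset.mem_insert.1 hcab with h | h
        · subst h; exact (Finset.mem_inter.1 haσ).1
        · simp only [Finset.mem_singleton] at h; subst h; exact (Finset.mem_inter.1 hbσ).1
      exact mcPt_mem t (Finset.mem_inter.2 ⟨hcσ, hcτ⟩)
    · -- a, b in both σ and τ
      apply mcConv_mono t (show σ ∩ ({a,b} : Finset (Fin n)) ⊆ σ ∩ τ from ?_) hpa
      intro i hi
      have hiσ := (Finset.mem_inter.1 hi).1
      have hiab := (Finset.mem_inter.1 hi).2
      have hiτ : i ∈ τ := by
        rcases Finset.mem_insert.1 hiab with h | h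
        · subst h; exact (Finset.mem_inter.1 haτ).1
        · simp only [Finset.mem_singleton] at h; subst h; exact (Finset.mem_inter.1 hbτ).1
      exact Finset.mem_inter.2 ⟨hiσ, hiτ⟩


lemma mcConv_convex (t : Fin n → ℝ) (σ : Finset (Fin n)) : Convex ℝ (mcConv 2 t σ) :=
  convex_convexHull ℝ _

/-- One-sided covering: a point of the hull on the nonpositive side of the line
through `a`, `b` lies in the hull of the nonpositive-side vertices. -/
lemma cover_one (t : Fin n → ℝ) (ht : StrictMono t) {a b : Fin n} (hab : a < b)
    {V V₁ V₂ : Finset (Fin n)} (ε : ℝ) (hε : ε ≠ 0)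
    (hVsub : V ⊆ V₁ ∪ V₂) (hV₁ : V₁ ⊆ V) (hV₂ : V₂ ⊆ V)
    (hV₁ne : V₁.Nonempty) (hV₂ne : V₂.Nonempty)
    (h₁ : ∀ i ∈ V₁, ε * lfun (t a) (t b) (mcPt t i) ≤ 0)
    (h₂ : ∀ i ∈ V₂, 0 ≤ ε * lfun (t a) (t b) (mcPt t i))
    (haV₁ : a ∈ V₁) (hbV₁ : b ∈ V₁)
    {p : Fin 2 → ℝ} (hp : p ∈ mcConv 2 t V) (hps : ε * lfun (t a) (t b) p ≤ 0) :
    p ∈ mcConv 2 t V₁ := by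
  have hAB : t a < t b := ht hab
  have zeroline : ∀ r ∈ mcConv 2 t V, lfun (t a) (t b) r = 0 → r ∈ mcConv 2 t V₁ := by
    intro r hr h0
    have : r ∈ mcConv 2 t ({a, b} : Finset (Fin n)) :=
      line_mem_pair t hAB h0 (hull_parabola t r hr)
    have hsub : ({a, b} : Finset (Fin n)) ⊆ V₁ := by
      intro i hi
      rcases Finset.mem_insert.1 hi with rfl | hi
      · exact haV₁
      · simp only [Finset.mem_singleton] at hi; subst hi; exact hbV₁
    exact mcConv_mono t hsub this
  have hp' : p ∈ mcConv 2 t (V₁ ∪ V₂) := mcConv_mono t hVsub hp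
  have himg : (fun i => momentCurve 2 (t i)) '' ↑(V₁ ∪ V₂)
      = ((fun i => momentCurve 2 (t i)) '' ↑V₁) ∪ ((fun i => momentCurve 2 (t i)) '' ↑V₂) := by
    rw [Finset.coe_union, Set.image_union]
  have hne₁ : ((fun i => momentCurve 2 (t i)) '' (↑V₁ : Set (Fin n))).Nonempty :=
    ⟨_, ⟨hV₁ne.choose, by exact_mod_cast hV₁ne.choose_spec, rfl⟩⟩
  have hne₂ : ((fun i => momentCurve 2 (t i)) '' (↑V₂ : Set (Fin n))).Nonempty :=
    ⟨_, ⟨hV₂ne.choose, by exact_mod_cast hV₂ne.choose_spec, rfl⟩⟩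
  rw [mcConv, himg, convexHull_union hne₁ hne₂, mem_convexJoin] at hp'
  obtain ⟨x, hx, y, hy, hseg⟩ := hp'
  have hx' : x ∈ mcConv 2 t V₁ := hx
  have hy' : y ∈ mcConv 2 t V₂ := hy
  obtain ⟨u₁, u₂, hu₁, hu₂, huadd, hueq⟩ := hseg
  have hFx : ε * lfun (t a) (t b) x ≤ 0 := hull_sign t (t a) (t b) ε h₁ x hx'
  have hFy : 0 ≤ ε * lfun (t a) (t b) y := by
    have := hull_sign t (t a) (t b) (-ε) (by intro i hi; have := h₂ i hi; nlinarith) y hy'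
    nlinarith
  rcases eq_or_lt_of_le hu₂ with hu₂0 | hu₂pos
  · have : p = x := by
      have hu₁1 : u₁ = 1 := by linarith
      rw [← hueq, hu₁1, ← hu₂0]; simp
    rw [this]; exact hx'
  · have hyV : y ∈ mcConv 2 t V := mcConv_mono t hV₂ hy'
    have hxV : x ∈ mcConv 2 t V := mcConv_mono t hV₁ hx'
    have hFp : ε * lfun (t a) (t b) p = u₁ * (ε * lfun (t a) (t b) x) + u₂ * (ε * lfun (t a) (t b) y) := by
      rw [← hueq, lfun_comb _ _ _ _ _ _ huadd]; ring
    rcases eq_or_lt_of_le hFy with hFy0 | hFypos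
    · -- y is on the line
      have hyl : lfun (t a) (t b) y = 0 := by
        rcases mul_eq_zero.1 hFy0.symm with h | h
        · exact absurd h hε
        · exact h
      have hyV₁ : y ∈ mcConv 2 t V₁ := zeroline y hyV hyl
      have : p ∈ segment ℝ x y := ⟨u₁, u₂, hu₁, hu₂, huadd, hueq⟩
      exact (mcConv_convex t V₁).segment_subset hx' hyV₁ this
    · -- genuine crossing: find the point r on the line
      set Fp := ε * lfun (t a) (t b) p with hFpdef
      set Fy := ε * lfun (t a) (t b) y with hFydef
      have hden : 0 < Fy - Fp := by simp only [hFpdef, hFydef]; linarith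
      set μ : ℝ := -Fp / (Fy - Fp) with hμ
      have hμ0 : 0 ≤ μ := div_nonneg (by simp only [hFpdef]; linarith) hden.le
      have hμ1 : μ ≤ 1 := by
        rw [hμ, div_le_one hden]; simp only [hFpdef, hFydef]; linarith
      set r : Fin 2 → ℝ := (1 - μ) • p + μ • y with hr
      have hrV : r ∈ mcConv 2 t V :=
        (mcConv_convex t V) hp hyV (by linarith) hμ0 (by ring)
      have hrl : lfun (t a) (t b) r = 0 := by
        have h1 : lfun (t a) (t b) r = (1 - μ) * lfun (t a) (t b) p + μ * lfun (t a) (t b) y := by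
          rw [hr]; exact lfun_comb _ _ _ _ _ _ (by ring)
        have h2 : ε * lfun (t a) (t b) r = (1 - μ) * Fp + μ * Fy := by
          rw [h1]; simp only [hFpdef, hFydef]; ring
        have h3 : (1 - μ) * Fp + μ * Fy = 0 := by
          rw [hμ]; field_simp; ring
        have h4 : ε * lfun (t a) (t b) r = 0 := by rw [h2, h3]
        rcases mul_eq_zero.1 h4 with h | h
        · exact absurd h hε
        · exact h
      have hrV₁ : r ∈ mcConv 2 t V₁ := zeroline r hrV hrl
      -- p is on the segment from x to r
      set D : ℝ := μ + u₂ * (1 - μ) with hD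
      have hDpos : 0 < D := by nlinarith
      have hu₁eq : u₁ = 1 - u₂ := by linarith
      have hcomb : (u₁ * μ / D) • x + (u₂ / D) • r = p := by
        funext i
        have hpi : p i = u₁ * x i + u₂ * y i := by
          rw [← hueq]; simp [Pi.add_apply, Pi.smul_apply, smul_eq_mul]
        have hri : r i = (1 - μ) * p i + μ * y i := by
          rw [hr]; simp [Pi.add_apply, Pi.smul_apply, smul_eq_mul]
        simp only [Pi.add_apply, Pi.smul_apply, smul_eq_mul]
        rw [hri, hpi, hu₁eq]
        field_simp
        ring
      have hpseg : p ∈ segment ℝ x r := by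
        refine ⟨u₁ * μ / D, u₂ / D, ?_, ?_, ?_, hcomb⟩
        · exact div_nonneg (mul_nonneg hu₁ hμ0) hDpos.le
        · exact div_nonneg hu₂ hDpos.le
        · rw [← add_div, div_eq_one_iff_eq hDpos.ne', hu₁eq, hD]; ring
      exact (mcConv_convex t V₁).segment_subset hx' hrV₁ hpseg

/-- Splitting the hull along the line through `a`, `b`. -/
lemma split_cover (t : Fin n → ℝ) (ht : StrictMono t) {a b : Fin n} (hab : a < b)
    {V V₁ V₂ : Finset (Fin n)}
    (hVsub : V ⊆ V₁ ∪ V₂) (hV₁ : V₁ ⊆ V) (hV₂ : V₂ ⊆ V)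
    (h₁ : ∀ i ∈ V₁, lfun (t a) (t b) (mcPt t i) ≤ 0)
    (h₂ : ∀ i ∈ V₂, 0 ≤ lfun (t a) (t b) (mcPt t i))
    (haV₁ : a ∈ V₁) (hbV₁ : b ∈ V₁) (haV₂ : a ∈ V₂) (hbV₂ : b ∈ V₂) :
    mcConv 2 t V ⊆ mcConv 2 t V₁ ∪ mcConv 2 t V₂ := by
  intro p hp
  rcases le_total (lfun (t a) (t b) p) 0 with h | h
  · left
    exact cover_one t ht hab 1 one_ne_zero hVsub hV₁ hV₂ ⟨a, haV₁⟩ ⟨a, haV₂⟩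
      (by intro i hi; simpa using h₁ i hi) (by intro i hi; simpa using h₂ i hi)
      haV₁ hbV₁ hp (by simpa using h)
  · right
    exact cover_one t ht hab (-1) (by norm_num)
      (by intro i hi; rcases Finset.mem_union.1 (hVsub hi) with h' | h'
          · exact Finset.mem_union.2 (Or.inr h')
          · exact Finset.mem_union.2 (Or.inl h'))
      hV₂ hV₁ ⟨a, haV₂⟩ ⟨a, haV₁⟩
      (by intro i hi; have := h₂ i hi; nlinarith) (by intro i hi; have := h₁ i hi; nlinarith)
      haV₂ hbV₂ hp (by nlinarith)


/-- All three edge conditions. -/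
def GoodEdge (L R M : Finset (Finset (Fin n))) (a b : Fin n) : Prop :=
  CondLe L a b ∧ CondMe M a b ∧ CondRe R a b

/-- find the consecutive pair of `V` around a value `x ∉ V`. -/
lemma gap_edge {V : Finset (Fin n)} {lo hi x : Fin n} (hlo : lo ∈ V) (hhi : hi ∈ V)
    (h1 : lo < x) (h2 : x < hi) (hx : x ∉ V) :
    ∃ u u', u ∈ V ∧ u' ∈ V ∧ lo ≤ u ∧ u < x ∧ x < u' ∧ u' ≤ hi ∧
      ∀ c ∈ V, ¬ (u < c ∧ c < u') := by
  have hS : (V.filter (fun c => c < x)).Nonempty := ⟨lo, Finset.mem_filter.2 ⟨hlo, h1⟩⟩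
  have hS' : (V.filter (fun c => x < c)).Nonempty := ⟨hi, Finset.mem_filter.2 ⟨hhi, h2⟩⟩
  set u := (V.filter (fun c => c < x)).max' hS with hu
  set u' := (V.filter (fun c => x < c)).min' hS' with hu'
  have huS := (V.filter (fun c => c < x)).max'_mem hS
  have hu'S := (V.filter (fun c => x < c)).min'_mem hS'
  have huV : u ∈ V := (Finset.mem_filter.1 huS).1
  have hux : u < x := (Finset.mem_filter.1 huS).2
  have hu'V : u' ∈ V := (Finset.mem_filter.1 hu'S).1
  have hxu' : x < u' := (Finset.mem_filter.1 hu'S).2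
  refine ⟨u, u', huV, hu'V, ?_, hux, hxu', ?_, ?_⟩
  · exact Finset.le_max' (V.filter (fun c => c < x)) lo (Finset.mem_filter.2 ⟨hlo, h1⟩)
  · exact Finset.min'_le (V.filter (fun c => x < c)) hi (Finset.mem_filter.2 ⟨hhi, h2⟩)
  · rintro c hcV ⟨huc, hcu'⟩
    rcases lt_trichotomy c x with h | h | h
    · exact absurd (Finset.le_max' (V.filter (fun c => c < x)) c
        (Finset.mem_filter.2 ⟨hcV, h⟩)) (not_le.2 huc)
    · exact hx (h ▸ hcV)
    · exact absurd (Finset.min'_le (V.filter (fun c => x < c)) c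
        (Finset.mem_filter.2 ⟨hcV, h⟩)) (not_le.2 hcu')

lemma fact1 {L R M : Finset (Finset (Fin n))} {V : Finset (Fin n)}
    (hP : ∀ a b : Fin n, PolygonEdge V a b → GoodEdge L R M a b)
    {a s z : Fin n} (haV : a ∈ V) (hsV : s ∈ V) (hzV : z ∈ V)
    (hmin : ∀ c ∈ V, a ≤ c) (hmax : ∀ c ∈ V, c ≤ z)
    (has : a < s) (hsz : s < z)
    (hbad : ¬ GoodEdge L R M s z) :
    ∃ m ∈ V, s < m ∧ m < z ∧
      ((∃ r, a ≤ r ∧ r < s ∧ ({r, m} : Finset (Fin n)) ∈ R) ∨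
       (∃ w₁ w₃, a ≤ w₁ ∧ w₁ < s ∧ z < w₃ ∧ ({w₁, m, w₃} : Finset (Fin n)) ∈ M)) := by
  have hedgeaz : PolygonEdge V a z :=
    ⟨haV, hzV, lt_trans has hsz, Or.inr (fun c hc => ⟨hmin c hc, hmax c hc⟩)⟩
  have hgaz := hP a z hedgeaz
  rw [GoodEdge, not_and_or, not_and_or] at hbad
  rcases hbad with h | h | h
  · -- Le-bad is impossible
    exfalso
    obtain ⟨l₁, l₂, hmem, h12, hs1, h1z, hz2⟩ := not_not.1 h
    exact hgaz.1 ⟨l₁, l₂, hmem, h12, lt_trans has hs1, h1z, hz2⟩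
  · -- Me-bad
    obtain ⟨w₁, w₂, w₃, hmem, h12, h23, hw1s, hsw2, hw2z, hzw3⟩ := not_not.1 h
    have hw1a : a ≤ w₁ := by
      by_contra hlt
      push_neg at hlt
      exact hgaz.2.1 ⟨w₁, w₂, w₃, hmem, h12, h23, hlt, lt_trans has hsw2, hw2z, hzw3⟩
    have hw2V : w₂ ∈ V := by
      by_contra hnV
      obtain ⟨u, u', huV, hu'V, hsu, huw, hwu', hu'z, hnb⟩ :=
        gap_edge hsV hzV hsw2 hw2z hnV
      have hedge : PolygonEdge V u u' := ⟨huV, hu'V, lt_trans huw hwu', Or.inl hnb⟩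
      exact (hP u u' hedge).2.1
        ⟨w₁, w₂, w₃, hmem, h12, h23, lt_of_lt_of_le hw1s hsu, huw, hwu',
          lt_of_le_of_lt hu'z hzw3⟩
    exact ⟨w₂, hw2V, hsw2, hw2z, Or.inr ⟨w₁, w₃, hw1a, hw1s, hzw3, hmem⟩⟩
  · -- Re-bad
    obtain ⟨r₁, r₂, hmem, h12, hr1s, hsr2, hr2z⟩ := not_not.1 h
    have hr1a : a ≤ r₁ := by
      by_contra hlt
      push_neg at hlt
      exact hgaz.2.2 ⟨r₁, r₂, hmem, h12, hlt, lt_trans has hsr2, hr2z⟩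
    have hr2V : r₂ ∈ V := by
      by_contra hnV
      obtain ⟨u, u', huV, hu'V, hsu, hur, hru', hu'z, hnb⟩ :=
        gap_edge hsV hzV hsr2 hr2z hnV
      have hedge : PolygonEdge V u u' := ⟨huV, hu'V, lt_trans hur hru', Or.inl hnb⟩
      exact (hP u u' hedge).2.2
        ⟨r₁, r₂, hmem, h12, lt_of_lt_of_le hr1s hsu, hur, hru'⟩
    exact ⟨r₂, hr2V, hsr2, hr2z, Or.inl ⟨r₁, hr1a, hr1s, hmem⟩⟩

lemma fact2 {L R M : Finset (Finset (Fin n))} {V : Finset (Fin n)}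
    (hP : ∀ a b : Fin n, PolygonEdge V a b → GoodEdge L R M a b)
    {a z m : Fin n} (haV : a ∈ V) (hmV : m ∈ V) (hzV : z ∈ V)
    (hmin : ∀ c ∈ V, a ≤ c) (hmax : ∀ c ∈ V, c ≤ z)
    (ham : a < m) (hmz : m < z)
    (hbad : ¬ GoodEdge L R M a m) :
    ∃ c ∈ V, a < c ∧ c < m ∧
      ((∃ l, m < l ∧ l ≤ z ∧ ({c, l} : Finset (Fin n)) ∈ L) ∨
       (∃ w₁ w₃, w₁ < a ∧ m < w₃ ∧ w₃ ≤ z ∧ ({w₁, c, w₃} : Finset (Fin n)) ∈ M)) := by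
  have hedgeaz : PolygonEdge V a z :=
    ⟨haV, hzV, lt_trans ham hmz, Or.inr (fun c hc => ⟨hmin c hc, hmax c hc⟩)⟩
  have hgaz := hP a z hedgeaz
  rw [GoodEdge, not_and_or, not_and_or] at hbad
  rcases hbad with h | h | h
  · -- Le-bad
    obtain ⟨l₁, l₂, hmem, h12, ha1, h1m, hm2⟩ := not_not.1 h
    have hl2z : l₂ ≤ z := by
      by_contra hlt
      push_neg at hlt
      exact hgaz.1 ⟨l₁, l₂, hmem, h12, ha1, lt_trans h1m hmz, hlt⟩
    have hl1V : l₁ ∈ V := by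
      by_contra hnV
      obtain ⟨u, u', huV, hu'V, hau, hul, hlu', hu'm, hnb⟩ :=
        gap_edge haV hmV ha1 h1m hnV
      have hedge : PolygonEdge V u u' := ⟨huV, hu'V, lt_trans hul hlu', Or.inl hnb⟩
      exact (hP u u' hedge).1
        ⟨l₁, l₂, hmem, h12, hul, hlu', lt_of_le_of_lt hu'm hm2⟩
    exact ⟨l₁, hl1V, ha1, h1m, Or.inl ⟨l₂, hm2, hl2z, hmem⟩⟩
  · -- Me-bad
    obtain ⟨w₁, w₂, w₃, hmem, h12, h23, hw1a, haw2, hw2m, hmw3⟩ := not_not.1 h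
    have hw3z : w₃ ≤ z := by
      by_contra hlt
      push_neg at hlt
      exact hgaz.2.1 ⟨w₁, w₂, w₃, hmem, h12, h23, hw1a, haw2, lt_trans hw2m hmz, hlt⟩
    have hw2V : w₂ ∈ V := by
      by_contra hnV
      obtain ⟨u, u', huV, hu'V, hau, huw, hwu', hu'm, hnb⟩ :=
        gap_edge haV hmV haw2 hw2m hnV
      have hedge : PolygonEdge V u u' := ⟨huV, hu'V, lt_trans huw hwu', Or.inl hnb⟩
      exact (hP u u' hedge).2.1
        ⟨w₁, w₂, w₃, hmem, h12, h23, lt_of_lt_of_le hw1a hau, huw, hwu',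
          lt_of_le_of_lt hu'm hmw3⟩
    exact ⟨w₂, hw2V, haw2, hw2m, Or.inr ⟨w₁, w₃, hw1a, hmw3, hw3z, hmem⟩⟩
  · -- Re-bad is impossible
    exfalso
    obtain ⟨r₁, r₂, hmem, h12, hr1a, har2, hr2m⟩ := not_not.1 h
    exact hgaz.2.2 ⟨r₁, r₂, hmem, h12, hr1a, har2, lt_trans hr2m hmz⟩

/-- The good-diagonal lemma. -/
lemma good_diag {L R M : Finset (Finset (Fin n))}
    (hLR : ¬ ∃ l₁ l₂ r₁ r₂ : Fin n,
      ({l₁, l₂} : Finset (Fin n)) ∈ L ∧ ({r₁, r₂} : Finset (Fin n)) ∈ R ∧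
      l₁ < l₂ ∧ r₁ < r₂ ∧ r₁ < l₁ ∧ l₁ < r₂ ∧ r₂ < l₂)
    (hLMR : ¬ ∃ v₁ v₂ w₁ w₂ w₃ : Fin n,
      ({v₁, v₂} : Finset (Fin n)) ∈ L ∪ R ∧ ({w₁, w₂, w₃} : Finset (Fin n)) ∈ M ∧
      v₁ < v₂ ∧ w₁ < w₂ ∧ w₂ < w₃ ∧ w₁ < v₁ ∧ v₁ < w₂ ∧ w₂ < v₂ ∧ v₂ < w₃)
    (hMM : ¬ ∃ v₁ v₂ v₃ w₁ w₂ w₃ : Fin n,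
      ({v₁, v₂, v₃} : Finset (Fin n)) ∈ M ∧ ({w₁, w₂, w₃} : Finset (Fin n)) ∈ M ∧
      v₁ < w₁ ∧ w₁ < v₂ ∧ v₂ < w₂ ∧ w₂ < v₃ ∧ v₃ < w₃)
    {V : Finset (Fin n)} (hcard : 4 ≤ V.card)
    (hP : ∀ a b : Fin n, PolygonEdge V a b → GoodEdge L R M a b) :
    ∃ p q : Fin n, p ∈ V ∧ q ∈ V ∧ p < q ∧ GoodEdge L R M p q ∧
      (∃ c ∈ V, p < c ∧ c < q) ∧ (∃ c ∈ V, c < p ∨ q < c) := by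
  have hne : V.Nonempty := Finset.card_pos.1 (by omega)
  set a := V.min' hne with ha
  set z := V.max' hne with hz
  have haV : a ∈ V := V.min'_mem hne
  have hzV : z ∈ V := V.max'_mem hne
  have hmin : ∀ c ∈ V, a ≤ c := fun c hc => V.min'_le c hc
  have hmax : ∀ c ∈ V, c ≤ z := fun c hc => V.le_max' c hc
  have haz : a < z := V.min'_lt_max'_of_card (by omega)
  have hEne : (V.erase a).Nonempty := by
    rw [← Finset.card_pos, Finset.card_erase_of_mem haV]; omega
  set s := (V.erase a).min' hEne with hs
  have hsE : s ∈ V.erase a := (V.erase a).min'_mem hEne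
  have hsV : s ∈ V := Finset.mem_of_mem_erase hsE
  have hsa : s ≠ a := Finset.ne_of_mem_erase hsE
  have has : a < s := lt_of_le_of_ne (hmin s hsV) (Ne.symm hsa)
  have hsle : ∀ c ∈ V, c ≠ a → s ≤ c := fun c hc hca =>
    (V.erase a).min'_le c (Finset.mem_erase.2 ⟨hca, hc⟩)
  have hsz : s < z := by
    have h1 : (V.erase a).min' hEne < (V.erase a).max' hEne :=
      (V.erase a).min'_lt_max'_of_card (by rw [Finset.card_erase_of_mem haV]; omega)
    have h2 : (V.erase a).max' hEne ≤ z :=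
      hmax _ (Finset.mem_of_mem_erase ((V.erase a).max'_mem hEne))
    exact lt_of_lt_of_le h1 h2
  by_cases hg : GoodEdge L R M s z
  · -- (s, z) is a good diagonal
    have hmidne : ∃ c ∈ V, c ∉ ({a, s, z} : Finset (Fin n)) := by
      by_contra hsub
      push_neg at hsub
      have : V ⊆ ({a, s, z} : Finset (Fin n)) := fun c hc => hsub c hc
      have := Finset.card_le_card this
      have : ({a, s, z} : Finset (Fin n)).card ≤ 3 := by
        apply le_trans (Finset.card_insert_le _ _)
        apply Nat.succ_le_succ
        apply le_trans (Finset.card_insert_le _ _)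
        simp
      omega
    obtain ⟨c, hcV, hcn⟩ := hmidne
    simp only [Finset.mem_insert, Finset.mem_singleton, not_or] at hcn
    obtain ⟨hca, hcs, hcz⟩ := hcn
    have hsc : s < c := lt_of_le_of_ne (hsle c hcV hca) (Ne.symm hcs)
    have hcz' : c < z := lt_of_le_of_ne (hmax c hcV) hcz
    exact ⟨s, z, hsV, hzV, hsz, hg, ⟨c, hcV, hsc, hcz'⟩, ⟨a, haV, Or.inl has⟩⟩
  · obtain ⟨m, hmV, hsm, hmz, hY⟩ := fact1 hP haV hsV hzV hmin hmax has hsz hg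
    by_cases hg2 : GoodEdge L R M a m
    · exact ⟨a, m, haV, hmV, lt_trans has hsm, hg2, ⟨s, hsV, has, hsm⟩,
        ⟨z, hzV, Or.inr hmz⟩⟩
    · exfalso
      obtain ⟨c, hcV, hac, hcm, hX⟩ := fact2 hP haV hmV hzV hmin hmax (lt_trans has hsm) hmz hg2
      have hsc : s ≤ c := hsle c hcV (ne_of_gt hac)
      rcases hX with ⟨l, hml, hlz, hLmem⟩ | ⟨w₁, w₃, hw1a, hmw3, hw3z, hMmem⟩
      · rcases hY with ⟨r, har, hrs, hRmem⟩ | ⟨w₁', w₃', haw1', hw1's, hzw3', hMmem'⟩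
        · -- L vs R: hLR
          exact hLR ⟨c, l, r, m, hLmem, hRmem, lt_trans hcm hml,
            lt_of_lt_of_le hrs (le_trans hsc (le_of_lt hcm)),
            lt_of_lt_of_le hrs hsc, hcm, hml⟩
        · -- L vs M: hLMR
          exact hLMR ⟨c, l, w₁', m, w₃', Finset.mem_union_left _ hLmem, hMmem',
            lt_trans hcm hml,
            lt_of_lt_of_le hw1's (le_trans hsc (le_of_lt hcm)),
            lt_trans hmz hzw3',
            lt_of_lt_of_le hw1's hsc, hcm, hml, lt_of_le_of_lt hlz hzw3'⟩
      · rcases hY with ⟨r, har, hrs, hRmem⟩ | ⟨w₁', w₃', haw1', hw1's, hzw3', hMmem'⟩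
        · -- M vs R: hLMR
          exact hLMR ⟨r, m, w₁, c, w₃, Finset.mem_union_right _ hRmem, hMmem,
            lt_of_lt_of_le hrs (le_trans hsc (le_of_lt hcm)),
            lt_of_lt_of_le (lt_of_lt_of_le hw1a har) (le_trans (le_of_lt hrs) hsc),
            lt_trans hcm hmw3,
            lt_of_lt_of_le hw1a har, lt_of_lt_of_le hrs hsc, hcm, hmw3⟩
        ·
          exact hMM ⟨w₁, c, w₃, w₁', m, w₃', hMmem, hMmem',
            lt_of_lt_of_le hw1a haw1', lt_of_lt_of_le hw1's hsc, hcm, hmw3,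
            lt_of_le_of_lt hw3z hzw3'⟩


/-- Every pair in a 3-element set is a polygon edge. -/
lemma polygonEdge_of_card_three {V : Finset (Fin n)} (hV : V.card = 3)
    {a b : Fin n} (ha : a ∈ V) (hb : b ∈ V) (hab : a < b) : PolygonEdge V a b := by
  refine ⟨ha, hb, hab, ?_⟩
  by_cases hmid : ∃ c ∈ V, a < c ∧ c < b
  · right
    obtain ⟨c, hcV, hac, hcb⟩ := hmid
    have hsub : ({a, c, b} : Finset (Fin n)) ⊆ V := by
      intro x hx
      simp only [Finset.mem_insert, Finset.mem_singleton] at hx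
      rcases hx with rfl | rfl | rfl <;> assumption
    have hcard3 : ({a, c, b} : Finset (Fin n)).card = 3 := by
      rw [Finset.card_insert_of_notMem, Finset.card_insert_of_notMem, Finset.card_singleton]
      · simp only [Finset.mem_singleton]; exact ne_of_lt hcb
      · simp only [Finset.mem_insert, Finset.mem_singleton, not_or]
        exact ⟨ne_of_lt hac, ne_of_lt hab⟩
    have hVeq : V = ({a, c, b} : Finset (Fin n)) :=
      (Finset.eq_of_subset_of_card_le hsub (by omega)).symm
    intro d hd
    rw [hVeq] at hd
    simp only [Finset.mem_insert, Finset.mem_singleton] at hd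
    rcases hd with rfl | rfl | rfl
    · exact ⟨le_refl _, le_of_lt hab⟩
    · exact ⟨le_of_lt hac, le_of_lt hcb⟩
    · exact ⟨le_of_lt hab, le_refl _⟩
  · left
    intro c hc hcc
    exact hmid ⟨c, hc, hcc.1, hcc.2⟩

lemma main_aux (t : Fin n → ℝ) (ht : StrictMono t) (L R M : Finset (Finset (Fin n)))
    (hLR : ¬ ∃ l₁ l₂ r₁ r₂ : Fin n,
      ({l₁, l₂} : Finset (Fin n)) ∈ L ∧ ({r₁, r₂} : Finset (Fin n)) ∈ R ∧
      l₁ < l₂ ∧ r₁ < r₂ ∧ r₁ < l₁ ∧ l₁ < r₂ ∧ r₂ < l₂)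
    (hLMR : ¬ ∃ v₁ v₂ w₁ w₂ w₃ : Fin n,
      ({v₁, v₂} : Finset (Fin n)) ∈ L ∪ R ∧ ({w₁, w₂, w₃} : Finset (Fin n)) ∈ M ∧
      v₁ < v₂ ∧ w₁ < w₂ ∧ w₂ < w₃ ∧ w₁ < v₁ ∧ v₁ < w₂ ∧ w₂ < v₂ ∧ v₂ < w₃)
    (hMM : ¬ ∃ v₁ v₂ v₃ w₁ w₂ w₃ : Fin n,
      ({v₁, v₂, v₃} : Finset (Fin n)) ∈ M ∧ ({w₁, w₂, w₃} : Finset (Fin n)) ∈ M ∧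
      v₁ < w₁ ∧ w₁ < v₂ ∧ v₂ < w₂ ∧ w₂ < v₃ ∧ v₃ < w₃) :
    ∀ (N : ℕ) (V : Finset (Fin n)), V.card ≤ N → 3 ≤ V.card →
    (∀ a b : Fin n, PolygonEdge V a b → GoodEdge L R M a b) →
    ∃ T : Finset (Finset (Fin n)),
      IsTriangulation 2 t V T ∧ UsesAllVertices V T ∧
      ∀ ρ ∈ T, ∀ a b : Fin n, a ∈ ρ → b ∈ ρ → a < b → GoodEdge L R M a b := by
  intro N
  induction N with
  | zero => intro V h1 h2 _; omega
  | succ N ih =>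
    intro V hcardN hcard3 hP
    rcases eq_or_lt_of_le hcard3 with hcard3' | hcard4
    · -- base case: V is a triangle
      refine ⟨{V}, ⟨?_, ?_, ?_⟩, ?_, ?_⟩
      · intro σ hσ
        rw [Finset.mem_singleton] at hσ
        subst hσ
        exact ⟨hcard3'.symm, subset_rfl⟩
      · intro σ hσ τ hτ hne
        rw [Finset.mem_singleton] at hσ hτ
        exact absurd (hσ.trans hτ.symm) hne
      · intro x hx
        exact ⟨V, Finset.mem_singleton_self V, hx⟩
      · intro c hc
        exact ⟨V, Finset.mem_singleton_self V, hc⟩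
      · intro ρ hρ a b haρ hbρ hab
        rw [Finset.mem_singleton] at hρ
        subst hρ
        exact hP a b (polygonEdge_of_card_three hcard3'.symm haρ hbρ hab)
    · -- inductive step: split along a good diagonal
      obtain ⟨p, q, hpV, hqV, hpq, hgood, ⟨c₀, hc₀V, hpc₀, hc₀q⟩, ⟨c₁, hc₁V, hc₁out⟩⟩ :=
        good_diag hLR hLMR hMM (by omega) hP
      set V₁ := V.filter (fun x => p ≤ x ∧ x ≤ q) with hV₁def
      set V₂ := V.filter (fun x => x ≤ p ∨ q ≤ x) with hV₂def
      have hV₁sub : V₁ ⊆ V := Finset.filter_subset _ _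
      have hV₂sub : V₂ ⊆ V := Finset.filter_subset _ _
      have hpV₁ : p ∈ V₁ := Finset.mem_filter.2 ⟨hpV, le_refl _, le_of_lt hpq⟩
      have hqV₁ : q ∈ V₁ := Finset.mem_filter.2 ⟨hqV, le_of_lt hpq, le_refl _⟩
      have hpV₂ : p ∈ V₂ := Finset.mem_filter.2 ⟨hpV, Or.inl (le_refl _)⟩
      have hqV₂ : q ∈ V₂ := Finset.mem_filter.2 ⟨hqV, Or.inr (le_refl _)⟩
      have hVsub : V ⊆ V₁ ∪ V₂ := by
        intro c hc
        rcases le_or_gt c p with h | h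
        · exact Finset.mem_union.2 (Or.inr (Finset.mem_filter.2 ⟨hc, Or.inl h⟩))
        · rcases le_or_gt q c with h' | h'
          · exact Finset.mem_union.2 (Or.inr (Finset.mem_filter.2 ⟨hc, Or.inr h'⟩))
          · exact Finset.mem_union.2 (Or.inl (Finset.mem_filter.2 ⟨hc, le_of_lt h, le_of_lt h'⟩))
      have hc₀V₁ : c₀ ∈ V₁ := Finset.mem_filter.2 ⟨hc₀V, le_of_lt hpc₀, le_of_lt hc₀q⟩
      have hc₀nV₂ : c₀ ∉ V₂ := by
        intro h
        rcases (Finset.mem_filter.1 h).2 with h' | h'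
        · exact absurd h' (not_le.2 hpc₀)
        · exact absurd h' (not_le.2 hc₀q)
      have hc₁V₂ : c₁ ∈ V₂ := by
        rcases hc₁out with h | h
        · exact Finset.mem_filter.2 ⟨hc₁V, Or.inl (le_of_lt h)⟩
        · exact Finset.mem_filter.2 ⟨hc₁V, Or.inr (le_of_lt h)⟩
      have hc₁nV₁ : c₁ ∉ V₁ := by
        intro h
        obtain ⟨-, h1, h2⟩ := Finset.mem_filter.1 h
        rcases hc₁out with h' | h'
        · exact absurd h1 (not_le.2 h')
        · exact absurd h2 (not_le.2 h')
      have hcard₁lt : V₁.card < V.card :=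
        Finset.card_lt_card ((Finset.ssubset_iff_of_subset hV₁sub).2 ⟨c₁, hc₁V, hc₁nV₁⟩)
      have hcard₂lt : V₂.card < V.card :=
        Finset.card_lt_card ((Finset.ssubset_iff_of_subset hV₂sub).2 ⟨c₀, hc₀V, hc₀nV₂⟩)
      have hcard₁3 : 3 ≤ V₁.card := by
        have hsub : ({p, c₀, q} : Finset (Fin n)) ⊆ V₁ := by
          intro x hx
          simp only [Finset.mem_insert, Finset.mem_singleton] at hx
          rcases hx with rfl | rfl | rfl <;> assumption
        have : ({p, c₀, q} : Finset (Fin n)).card = 3 := by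
          rw [Finset.card_insert_of_notMem, Finset.card_insert_of_notMem,
            Finset.card_singleton]
          · simp only [Finset.mem_singleton]; exact ne_of_lt hc₀q
          · simp only [Finset.mem_insert, Finset.mem_singleton, not_or]
            exact ⟨ne_of_lt hpc₀, ne_of_lt hpq⟩
        calc 3 = ({p, c₀, q} : Finset (Fin n)).card := this.symm
          _ ≤ V₁.card := Finset.card_le_card hsub
      have hcard₂3 : 3 ≤ V₂.card := by
        have hc₁p : c₁ ≠ p := by rcases hc₁out with h | h; exact ne_of_lt h;
                                 exact ne_of_gt (lt_trans hpq h)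
        have hc₁q : c₁ ≠ q := by rcases hc₁out with h | h; exact ne_of_lt (lt_trans h hpq);
                                 exact ne_of_gt h
        have hsub : ({c₁, p, q} : Finset (Fin n)) ⊆ V₂ := by
          intro x hx
          simp only [Finset.mem_insert, Finset.mem_singleton] at hx
          rcases hx with rfl | rfl | rfl <;> assumption
        have : ({c₁, p, q} : Finset (Fin n)).card = 3 := by
          rw [Finset.card_insert_of_notMem, Finset.card_insert_of_notMem,
            Finset.card_singleton]
          · simp only [Finset.mem_singleton]; exact ne_of_lt hpq
          · simp only [Finset.mem_insert, Finset.mem_singleton, not_or]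
            exact ⟨hc₁p, hc₁q⟩
        calc 3 = ({c₁, p, q} : Finset (Fin n)).card := this.symm
          _ ≤ V₂.card := Finset.card_le_card hsub
      -- polygon edges of the two parts are good
      have hP₁ : ∀ a b : Fin n, PolygonEdge V₁ a b → GoodEdge L R M a b := by
        rintro a b ⟨haV₁, hbV₁, hab, hdisj⟩
        have hpa : p ≤ a := (Finset.mem_filter.1 haV₁).2.1
        have haq : a ≤ q := (Finset.mem_filter.1 haV₁).2.2
        have hpb : p ≤ b := (Finset.mem_filter.1 hbV₁).2.1
        have hbq : b ≤ q := (Finset.mem_filter.1 hbV₁).2.2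
        rcases hdisj with hnb | hall
        · -- consecutive also in V
          apply hP a b
          refine ⟨hV₁sub haV₁, hV₁sub hbV₁, hab, Or.inl ?_⟩
          intro c hc hcc
          exact hnb c (Finset.mem_filter.2
            ⟨hc, le_trans hpa (le_of_lt hcc.1), le_trans (le_of_lt hcc.2) hbq⟩) hcc
        · -- a, b are the extremes of V₁, i.e. a = p, b = q
          have hap : a = p := le_antisymm ((hall p hpV₁).1) hpa
          have hbq' : b = q := le_antisymm hbq ((hall q hqV₁).2)
          rw [hap, hbq']
          exact hgood
      have hP₂ : ∀ a b : Fin n, PolygonEdge V₂ a b → GoodEdge L R M a b := by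
        rintro a b ⟨haV₂, hbV₂, hab, hdisj⟩
        rcases hdisj with hnb | hall
        · by_cases hmid : ∃ c ∈ V, a < c ∧ c < b
          · -- then a = p and b = q
            obtain ⟨c, hcV, hac, hcb⟩ := hmid
            have hcn : c ∉ V₂ := fun h => hnb c h ⟨hac, hcb⟩
            have hpc : p < c := by
              by_contra h
              push_neg at h
              exact hcn (Finset.mem_filter.2 ⟨hcV, Or.inl h⟩)
            have hcq : c < q := by
              by_contra h
              push_neg at h
              exact hcn (Finset.mem_filter.2 ⟨hcV, Or.inr h⟩)
            have hap : a ≤ p := by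
              rcases (Finset.mem_filter.1 haV₂).2 with h | h
              · exact h
              · exact absurd (lt_trans hac hcq) (not_lt.2 h)
            have hqb : q ≤ b := by
              rcases (Finset.mem_filter.1 hbV₂).2 with h | h
              · exact absurd (lt_trans hpc hcb) (not_lt.2 h)
              · exact h
            have hap' : a = p := by
              rcases eq_or_lt_of_le hap with h | h
              · exact h
              · exact absurd ⟨h, lt_of_lt_of_le hpq hqb⟩ (hnb p hpV₂)
            have hbq' : b = q := by
              rcases eq_or_lt_of_le hqb with h | h
              · exact h.symm
              · exfalso
                exact hnb q hqV₂ ⟨lt_of_le_of_lt hap (lt_of_le_of_lt (le_of_lt hpc) hcq), h⟩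
            rw [hap', hbq']
            exact hgood
          · apply hP a b
            exact ⟨hV₂sub haV₂, hV₂sub hbV₂, hab, Or.inl (fun c hc hcc => hmid ⟨c, hc, hcc⟩)⟩
        · -- extremes of V₂ are the extremes of V
          apply hP a b
          refine ⟨hV₂sub haV₂, hV₂sub hbV₂, hab, Or.inr ?_⟩
          intro c hc
          rcases Finset.mem_union.1 (hVsub hc) with h | h
          · -- c ∈ V₁: sandwich using p, q ∈ V₂
            obtain ⟨-, h1, h2⟩ := Finset.mem_filter.1 h
            exact ⟨le_trans (hall p hpV₂).1 h1, le_trans h2 (hall q hqV₂).2⟩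
          · exact hall c h
      obtain ⟨T₁, hT₁, hU₁, hG₁⟩ := ih V₁ (by omega) hcard₁3 hP₁
      obtain ⟨T₂, hT₂, hU₂, hG₂⟩ := ih V₂ (by omega) hcard₂3 hP₂
      -- sign conditions
      have h₁sign : ∀ i ∈ V₁, lfun (t p) (t q) (mcPt t i) ≤ 0 := by
        intro i hi
        obtain ⟨-, h1, h2⟩ := Finset.mem_filter.1 hi
        rw [lfun_mcPt]
        apply mul_nonpos_of_nonneg_of_nonpos
        · exact sub_nonneg.2 (ht.monotone h1)
        · exact sub_nonpos.2 (ht.monotone h2)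
      have h₂sign : ∀ i ∈ V₂, 0 ≤ lfun (t p) (t q) (mcPt t i) := by
        intro i hi
        rw [lfun_mcPt]
        rcases (Finset.mem_filter.1 hi).2 with h | h
        · have h1 : t i - t p ≤ 0 := sub_nonpos.2 (ht.monotone h)
          have h2 : t i - t q ≤ 0 := sub_nonpos.2 (ht.monotone (le_trans h (le_of_lt hpq)))
          nlinarith
        · exact mul_nonneg (sub_nonneg.2 (ht.monotone (le_trans (le_of_lt hpq) h)))
            (sub_nonneg.2 (ht.monotone h))
      obtain ⟨hT₁card, hT₁no, hT₁cov⟩ := hT₁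
      obtain ⟨hT₂card, hT₂no, hT₂cov⟩ := hT₂
      refine ⟨T₁ ∪ T₂, ⟨?_, ?_, ?_⟩, ?_, ?_⟩
      · intro σ hσ
        rcases Finset.mem_union.1 hσ with h | h
        · exact ⟨(hT₁card σ h).1, (hT₁card σ h).2.trans hV₁sub⟩
        · exact ⟨(hT₂card σ h).1, (hT₂card σ h).2.trans hV₂sub⟩
      · intro σ hσ τ hτ hne
        have key : ∀ σ' τ' : Finset (Fin n), σ' ∈ T₁ → τ' ∈ T₂ →
            mcConv 2 t σ' ∩ mcConv 2 t τ' ⊆ mcConv 2 t (σ' ∩ τ') := by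
          intro σ' τ' hσ' hτ'
          exact cross_nonoverlap t ht hpq
            (fun i hi => h₁sign i ((hT₁card σ' hσ').2 hi))
            (fun i hi => h₂sign i ((hT₂card τ' hτ').2 hi))
        rcases Finset.mem_union.1 hσ with h | h <;> rcases Finset.mem_union.1 hτ with h' | h'
        · exact hT₁no σ h τ h' hne
        · exact fun hov => hov (key σ τ h h')
        · intro hov
          apply hov
          intro x hx
          have := key τ σ h' h ⟨hx.2, hx.1⟩
          rwa [Finset.inter_comm] at this
        · exact hT₂no σ h τ h' hne
      · intro x hx
        rcases split_cover t ht hpq hVsub hV₁sub hV₂sub h₁sign h₂sign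
          hpV₁ hqV₁ hpV₂ hqV₂ hx with h | h
        · obtain ⟨σ, hσ, hxσ⟩ := hT₁cov x h
          exact ⟨σ, Finset.mem_union.2 (Or.inl hσ), hxσ⟩
        · obtain ⟨σ, hσ, hxσ⟩ := hT₂cov x h
          exact ⟨σ, Finset.mem_union.2 (Or.inr hσ), hxσ⟩
      · intro c hc
        rcases Finset.mem_union.1 (hVsub hc) with h | h
        · obtain ⟨σ, hσ, hcσ⟩ := hU₁ c h
          exact ⟨σ, Finset.mem_union.2 (Or.inl hσ), hcσ⟩
        · obtain ⟨σ, hσ, hcσ⟩ := hU₂ c h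
          exact ⟨σ, Finset.mem_union.2 (Or.inr hσ), hcσ⟩
      · intro ρ hρ a b haρ hbρ hab
        rcases Finset.mem_union.1 hρ with h | h
        · exact hG₁ ρ h a b haρ hbρ hab
        · exact hG₂ ρ h a b haρ hbρ hab


end MCAux

/-- **Lemma (triangulating a polygon avoiding interlacing patterns).** Let `L, R` be sets
of edges and `M` a set of triangles on `γ₂` satisfying (LR), (LMR) and (MM). If `V ⊆ [n]`
with `|V| ≥ 3` is such that every edge of the convex polygon `P = conv(V)` satisfies
(Le), (Me) and (Re), then there is a triangulation `T` of `P` with vertex set `V` all of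
whose edges satisfy (Le), (Me) and (Re). -/
theorem exists_triangulation_avoiding_patterns
    (n : ℕ) (t : Fin n → ℝ) (ht : StrictMono t)
    (L R M : Finset (Finset (Fin n)))
    (hL : ∀ e ∈ L, e.card = 2) (hR : ∀ e ∈ R, e.card = 2) (hM : ∀ w ∈ M, w.card = 3)
    (hLR : ¬ ∃ l₁ l₂ r₁ r₂ : Fin n,
      ({l₁, l₂} : Finset (Fin n)) ∈ L ∧ ({r₁, r₂} : Finset (Fin n)) ∈ R ∧
      l₁ < l₂ ∧ r₁ < r₂ ∧ r₁ < l₁ ∧ l₁ < r₂ ∧ r₂ < l₂)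
    (hLMR : ¬ ∃ v₁ v₂ w₁ w₂ w₃ : Fin n,
      ({v₁, v₂} : Finset (Fin n)) ∈ L ∪ R ∧ ({w₁, w₂, w₃} : Finset (Fin n)) ∈ M ∧
      v₁ < v₂ ∧ w₁ < w₂ ∧ w₂ < w₃ ∧ w₁ < v₁ ∧ v₁ < w₂ ∧ w₂ < v₂ ∧ v₂ < w₃)
    (hMM : ¬ ∃ v₁ v₂ v₃ w₁ w₂ w₃ : Fin n,
      ({v₁, v₂, v₃} : Finset (Fin n)) ∈ M ∧ ({w₁, w₂, w₃} : Finset (Fin n)) ∈ M ∧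
      v₁ < w₁ ∧ w₁ < v₂ ∧ v₂ < w₂ ∧ w₂ < v₃ ∧ v₃ < w₃)
    (V : Finset (Fin n)) (hV : 3 ≤ V.card)
    (hP : ∀ a b : Fin n, PolygonEdge V a b →
      CondLe L a b ∧ CondMe M a b ∧ CondRe R a b) :
    ∃ T : Finset (Finset (Fin n)),
      IsTriangulation 2 t V T ∧ UsesAllVertices V T ∧
      ∀ ρ ∈ T, ∀ a b : Fin n, a ∈ ρ → b ∈ ρ → a < b →
        CondLe L a b ∧ CondMe M a b ∧ CondRe R a b := by
  have hP' : ∀ a b : Fin n, PolygonEdge V a b → MCAux.GoodEdge L R M a b := hP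
  obtain ⟨T, h1, h2, h3⟩ := MCAux.main_aux t ht L R M hLR hLMR hMM V.card V le_rfl hV hP'
  exact ⟨T, h1, h2, fun ρ hρ a b ha hb hab => h3 ρ hρ a b ha hb hab⟩
end

section
/- Let L and R be finite sets of 2-element subsets of [n] with M = ∅, satisfying condition (LR): there are no {l₁<l₂} ∈ L and {r₁<r₂} ∈ R with r₁ < l₁ < r₂ < l₂. Let V ⊆ [n] with |V| ≥ 3 be such that each edge of the convex polygon P = conv(V) (vertices on the moment curve γ₂) satisfies (Le) and (Re). Then there exists a triangulation T of P with vertex set V such that every edge of T satisfies (Le) and (Re). -/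
open Finset

section Aux

/-- affine functional on ℝ² -/
def aff (A B C : ℝ) (x : Fin 2 → ℝ) : ℝ := A * x 0 + B * x 1 + C

/-- affine functional on ℝ² -/
lemma aff_pair (A B C a b : ℝ) (hab : a + b = 1) (p q : Fin 2 → ℝ) :
    aff A B C (a • p + b • q) = a * aff A B C p + b * aff A B C q := by
  have hb : b = 1 - a := by linarith
  subst hb
  simp only [aff, Pi.add_apply, Pi.smul_apply, smul_eq_mul]
  ring

lemma aff_sum {ι : Type*} (A B C : ℝ) (s : Finset ι) (w : ι → ℝ) (q : ι → (Fin 2 → ℝ))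
    (hw : ∑ i ∈ s, w i = 1) :
    aff A B C (∑ i ∈ s, w i • q i) = ∑ i ∈ s, w i * aff A B C (q i) := by
  simp only [aff, Finset.sum_apply, Pi.smul_apply, smul_eq_mul, mul_add, Finset.mul_sum,
    Finset.sum_add_distrib]
  rw [← Finset.sum_mul, hw]
  congr 1
  · congr 1 <;> · apply Finset.sum_congr rfl; intro i _; ring
  · ring

lemma aff_nonneg_of_mem_hull (A B C : ℝ) (S : Finset (Fin 2 → ℝ))
    (hS : ∀ y ∈ S, 0 ≤ aff A B C y) {x : Fin 2 → ℝ}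
    (hx : x ∈ convexHull ℝ (S : Set (Fin 2 → ℝ))) : 0 ≤ aff A B C x := by
  rw [Finset.convexHull_eq] at hx
  obtain ⟨w, hw0, hw1, hwx⟩ := hx
  rw [← hwx, Finset.centerMass_eq_of_sum_1 _ _ hw1]
  rw [aff_sum A B C S w id hw1]
  exact Finset.sum_nonneg fun y hy => mul_nonneg (hw0 y hy) (hS y hy)

lemma mem_face_of_aff_eq_zero (A B C : ℝ) (S : Finset (Fin 2 → ℝ))
    (hS : ∀ y ∈ S, 0 ≤ aff A B C y) {x : Fin 2 → ℝ}
    (hx : x ∈ convexHull ℝ (S : Set (Fin 2 → ℝ))) (hx0 : aff A B C x = 0) :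
    x ∈ convexHull ℝ ((S.filter fun y => aff A B C y = 0 : Finset (Fin 2 → ℝ)) :
      Set (Fin 2 → ℝ)) := by
  classical
  rw [Finset.convexHull_eq] at hx
  obtain ⟨w, hw0, hw1, hwx⟩ := hx
  rw [← hwx, Finset.centerMass_eq_of_sum_1 _ _ hw1] at hx0 ⊢
  rw [aff_sum A B C S w id hw1] at hx0
  have hterm : ∀ y ∈ S, w y * aff A B C (id y) = 0 :=
    (Finset.sum_eq_zero_iff_of_nonneg
      (fun y hy => mul_nonneg (hw0 y hy) (hS y hy))).1 hx0
  have hzero : ∀ y ∈ S, aff A B C y ≠ 0 → w y = 0 := by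
    intro y hy hne
    have := hterm y hy
    simp only [id] at this
    rcases mul_eq_zero.1 this with h | h
    · exact h
    · exact absurd h hne
  set S' := S.filter fun y => aff A B C y = 0 with hS'
  have hsum' : ∑ y ∈ S', w y = 1 := by
    rw [← hw1]
    apply Finset.sum_subset (Finset.filter_subset _ _)
    intro y hy hny
    apply hzero y hy
    intro h0
    exact hny (Finset.mem_filter.2 ⟨hy, h0⟩)
  rw [Finset.convexHull_eq]
  refine ⟨w, fun y hy => hw0 y (Finset.mem_filter.1 hy).1, hsum', ?_⟩
  rw [Finset.centerMass_eq_of_sum_1 _ _ hsum']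
  apply Finset.sum_subset (Finset.filter_subset _ _)
  intro y hy hny
  have : w y = 0 := by
    apply hzero y hy
    intro h0
    exact hny (Finset.mem_filter.2 ⟨hy, h0⟩)
  simp [this]

lemma aff_para (α β τ : ℝ) :
    aff (-(α + β)) 1 (α * β) (momentCurve 2 τ) = (τ - α) * (τ - β) := by
  simp only [aff, momentCurve]
  norm_num
  ring

lemma aff_para_neg (α β τ : ℝ) :
    aff (α + β) (-1) (-(α * β)) (momentCurve 2 τ) = -((τ - α) * (τ - β)) := by
  simp only [aff, momentCurve]
  norm_num
  ring

lemma mem_segment_para {α β : ℝ} (hαβ : α < β) (x : Fin 2 → ℝ)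
    (h1 : x 1 = (α + β) * x 0 - α * β) (h2 : α ≤ x 0) (h3 : x 0 ≤ β) :
    x ∈ segment ℝ (momentCurve 2 α) (momentCurve 2 β) := by
  have hd : β - α > 0 := by linarith
  refine ⟨(β - x 0) / (β - α), (x 0 - α) / (β - α), div_nonneg (by linarith) (by linarith), div_nonneg (by linarith) (by linarith), ?_, ?_⟩
  · field_simp; ring
  · funext i
    fin_cases i <;>
      simp only [Pi.add_apply, Pi.smul_apply, smul_eq_mul, momentCurve] <;> norm_num <;>
      field_simp <;> nlinarith [h1]

section
variable {n : ℕ} (t : Fin n → ℝ)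

lemma mcConv_eq (σ : Finset (Fin n)) :
    mcConv 2 t σ = convexHull ℝ ((σ.image fun i => momentCurve 2 (t i) : Finset (Fin 2 → ℝ)) :
      Set (Fin 2 → ℝ)) := by
  rw [mcConv, Finset.coe_image]

lemma mem_mcConv {σ : Finset (Fin n)} {j : Fin n} (hj : j ∈ σ) :
    momentCurve 2 (t j) ∈ mcConv 2 t σ :=
  subset_convexHull ℝ _ ⟨j, hj, rfl⟩

lemma mcConv_mono {σ τ : Finset (Fin n)} (h : σ ⊆ τ) : mcConv 2 t σ ⊆ mcConv 2 t τ :=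
  convexHull_mono (Set.image_mono h)

lemma aff_nonneg_mcConv (A B C : ℝ) (σ : Finset (Fin n))
    (h : ∀ j ∈ σ, 0 ≤ aff A B C (momentCurve 2 (t j))) {x : Fin 2 → ℝ}
    (hx : x ∈ mcConv 2 t σ) : 0 ≤ aff A B C x := by
  rw [mcConv_eq] at hx
  apply aff_nonneg_of_mem_hull A B C _ _ hx
  intro y hy
  obtain ⟨j, hj, rfl⟩ := Finset.mem_image.1 hy
  exact h j hj

lemma mcConv_face (A B C : ℝ) (σ ρ : Finset (Fin n))
    (h : ∀ j ∈ σ, 0 ≤ aff A B C (momentCurve 2 (t j))) {x : Fin 2 → ℝ}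
    (hx : x ∈ mcConv 2 t σ) (hx0 : aff A B C x = 0)
    (hρ : ∀ j ∈ σ, aff A B C (momentCurve 2 (t j)) = 0 → j ∈ ρ) :
    x ∈ mcConv 2 t ρ := by
  classical
  rw [mcConv_eq] at hx
  have h' : ∀ y ∈ σ.image fun i => momentCurve 2 (t i), 0 ≤ aff A B C y := by
    intro y hy
    obtain ⟨j, hj, rfl⟩ := Finset.mem_image.1 hy
    exact h j hj
  have := mem_face_of_aff_eq_zero A B C _ h' hx hx0
  rw [mcConv_eq]
  refine convexHull_mono ?_ this
  intro y hy
  rw [Finset.mem_coe, Finset.mem_filter] at hy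
  obtain ⟨hy1, hy2⟩ := hy
  obtain ⟨j, hj, rfl⟩ := Finset.mem_image.1 hy1
  exact Finset.mem_coe.2 (Finset.mem_image.2 ⟨j, hρ j hj hy2, rfl⟩)

lemma glue (A : Finset (Fin n)) (c u w : Fin n)
    (hu : u ∈ A) (hw : w ∈ A) (hc : c ∉ A)
    (Af Bf Cf Ag Bg Cg Ah Bh Ch : ℝ)
    (hfA : ∀ j ∈ A, 0 ≤ aff Af Bf Cf (momentCurve 2 (t j)))
    (hface : ∀ j ∈ A, aff Af Bf Cf (momentCurve 2 (t j)) = 0 → j = u ∨ j = w)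
    (hfc : aff Af Bf Cf (momentCurve 2 (t c)) < 0)
    (hfu : aff Af Bf Cf (momentCurve 2 (t u)) = 0)
    (hfw : aff Af Bf Cf (momentCurve 2 (t w)) = 0)
    (hgA : ∀ j ∈ A, 0 ≤ aff Ag Bg Cg (momentCurve 2 (t j)))
    (hgc : aff Ag Bg Cg (momentCurve 2 (t c)) = 0)
    (hhA : ∀ j ∈ A, 0 ≤ aff Ah Bh Ch (momentCurve 2 (t j)))
    (hhc : aff Ah Bh Ch (momentCurve 2 (t c)) = 0)
    (hseg : ∀ x : Fin 2 → ℝ, aff Af Bf Cf x = 0 → 0 ≤ aff Ag Bg Cg x → 0 ≤ aff Ah Bh Ch x →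
      x ∈ segment ℝ (momentCurve 2 (t u)) (momentCurve 2 (t w))) :
    (mcConv 2 t (insert c A) ⊆ mcConv 2 t A ∪ mcConv 2 t {u, c, w}) ∧
    (∀ σ : Finset (Fin n), σ ⊆ A → ¬ Overlap 2 t {u, c, w} σ) := by
  classical
  set P : Fin n → (Fin 2 → ℝ) := fun i => momentCurve 2 (t i) with hP
  have hPu : P u ∈ mcConv 2 t ({u, c, w} : Finset (Fin n)) := mem_mcConv t (by simp)
  have hPw : P w ∈ mcConv 2 t ({u, c, w} : Finset (Fin n)) := mem_mcConv t (by simp)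
  have hPc : P c ∈ mcConv 2 t ({u, c, w} : Finset (Fin n)) := mem_mcConv t (by simp)
  have hPuA : P u ∈ mcConv 2 t A := mem_mcConv t hu
  have hPwA : P w ∈ mcConv 2 t A := mem_mcConv t hw
  have hsegΔ : segment ℝ (P u) (P w) ⊆ mcConv 2 t ({u, c, w} : Finset (Fin n)) :=
    (convex_convexHull ℝ _).segment_subset hPu hPw
  have hsegA : segment ℝ (P u) (P w) ⊆ mcConv 2 t A :=
    (convex_convexHull ℝ _).segment_subset hPuA hPwA
  constructor
  · -- coverage
    intro x hx
    rw [mcConv_eq] at hx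
    have himg : ((insert c A).image P : Finset (Fin 2 → ℝ)) = insert (P c) (A.image P) :=
      Finset.image_insert _ _ _
    rw [himg, Finset.coe_insert,
      convexHull_insert ⟨P u, Finset.mem_coe.2 (Finset.mem_image.2 ⟨u, hu, rfl⟩)⟩,
      mem_convexJoin] at hx
    obtain ⟨p, hp, y, hy, hxseg⟩ := hx
    rw [Set.mem_singleton_iff] at hp
    subst hp
    obtain ⟨a, b, ha, hb, hab, hxe⟩ := hxseg
    have hyA : y ∈ mcConv 2 t A := by rw [mcConv_eq]; exact hy
    set Fc := aff Af Bf Cf (P c) with hFc_def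
    set Fy := aff Af Bf Cf y with hFy_def
    have hFy : 0 ≤ Fy := aff_nonneg_of_mem_hull _ _ _ _
      (by intro z hz; obtain ⟨j, hj, rfl⟩ := Finset.mem_image.1 hz; exact hfA j hj) hy
    have hGy : 0 ≤ aff Ag Bg Cg y := aff_nonneg_of_mem_hull _ _ _ _
      (by intro z hz; obtain ⟨j, hj, rfl⟩ := Finset.mem_image.1 hz; exact hgA j hj) hy
    have hHy : 0 ≤ aff Ah Bh Ch y := aff_nonneg_of_mem_hull _ _ _ _
      (by intro z hz; obtain ⟨j, hj, rfl⟩ := Finset.mem_image.1 hz; exact hhA j hj) hy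
    have hxv : aff Af Bf Cf x = a * Fc + b * Fy := by
      rw [← hxe]; exact aff_pair _ _ _ a b hab _ _
    rcases eq_or_lt_of_le hFy with hFy0 | hFy0
    · -- F y = 0 : whole segment is in the triangle
      right
      have hym : y ∈ segment ℝ (P u) (P w) := hseg y hFy0.symm hGy hHy
      have : x ∈ segment ℝ (P c) y := ⟨a, b, ha, hb, hab, hxe⟩
      exact (convex_convexHull ℝ _).segment_subset hPc (hsegΔ hym) this
    · -- F y > 0 : define the crossing point m
      have hden : Fc - Fy < 0 := by linarith
      set s : ℝ := Fc / (Fc - Fy) with hs_def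
      have hs_eq : s * (Fc - Fy) = Fc := div_mul_cancel₀ _ (ne_of_lt hden)
      have hs0 : 0 < s := by nlinarith
      have hs1 : s < 1 := by nlinarith
      set m : Fin 2 → ℝ := (1 - s) • P c + s • y with hm_def
      have hFm : aff Af Bf Cf m = 0 := by
        rw [hm_def, aff_pair _ _ _ (1 - s) s (by ring)]
        have : (1 - s) * Fc + s * Fy = Fc - s * (Fc - Fy) := by ring
        rw [← hFc_def, ← hFy_def, this, hs_eq]; ring
      have hGm : 0 ≤ aff Ag Bg Cg m := by
        rw [hm_def, aff_pair _ _ _ (1 - s) s (by ring), hgc]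
        nlinarith
      have hHm : 0 ≤ aff Ah Bh Ch m := by
        rw [hm_def, aff_pair _ _ _ (1 - s) s (by ring), hhc]
        nlinarith
      have hmseg : m ∈ segment ℝ (P u) (P w) := hseg m hFm hGm hHm
      rcases le_total (aff Af Bf Cf x) 0 with hx0 | hx0
      · -- below the chord : x in the triangle
        right
        have hbs : b ≤ s := by nlinarith
        have hkey : ((s - b) / s) • P c + (b / s) • m = x := by
          funext i
          have hxi : x i = a * P c i + b * y i := by
            rw [← hxe]; simp [Pi.add_apply, Pi.smul_apply, smul_eq_mul]
          have hmi : m i = (1 - s) * P c i + s * y i := by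
            rw [hm_def]; simp [Pi.add_apply, Pi.smul_apply, smul_eq_mul]
          have hba : a = 1 - b := by linarith
          rw [Pi.add_apply, Pi.smul_apply, Pi.smul_apply, smul_eq_mul, smul_eq_mul,
            hmi, hxi, hba]
          field_simp
          ring
        have hxm : x ∈ segment ℝ (P c) m :=
          ⟨(s - b) / s, b / s, div_nonneg (by linarith) hs0.le,
            div_nonneg hb hs0.le, by field_simp; ring, hkey⟩
        exact (convex_convexHull ℝ _).segment_subset hPc (hsegΔ hmseg) hxm
      · -- above the chord : x in the polygon
        left
        have hbs : s ≤ b := by nlinarith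
        have hkey : (a / (1 - s)) • m + ((b - s) / (1 - s)) • y = x := by
          funext i
          have hxi : x i = a * P c i + b * y i := by
            rw [← hxe]; simp [Pi.add_apply, Pi.smul_apply, smul_eq_mul]
          have hmi : m i = (1 - s) * P c i + s * y i := by
            rw [hm_def]; simp [Pi.add_apply, Pi.smul_apply, smul_eq_mul]
          have hba : a = 1 - b := by linarith
          rw [Pi.add_apply, Pi.smul_apply, Pi.smul_apply, smul_eq_mul, smul_eq_mul,
            hmi, hxi, hba]
          have h1s : (1 : ℝ) - s ≠ 0 := by linarith
          field_simp
          ring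
        have hxm : x ∈ segment ℝ m y :=
          ⟨a / (1 - s), (b - s) / (1 - s), div_nonneg ha (by linarith),
            div_nonneg (by linarith) (by linarith), by rw [← add_div, show a + (b - s) = 1 - s by linarith]; exact div_self (by linarith), hkey⟩
        exact (convex_convexHull ℝ _).segment_subset (hsegA hmseg) hyA hxm
  · -- non-overlap
    intro σ hσ hov
    apply hov
    rintro x ⟨hxΔ, hxσ⟩
    have h1 : 0 ≤ aff Af Bf Cf x :=
      aff_nonneg_mcConv t _ _ _ σ (fun j hj => hfA j (hσ hj)) hxσ
    have h2 : 0 ≤ aff (-Af) (-Bf) (-Cf) x := by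
      apply aff_nonneg_mcConv t _ _ _ ({u, c, w} : Finset (Fin n)) _ hxΔ
      intro j hj
      have hval : aff (-Af) (-Bf) (-Cf) (P j) = -(aff Af Bf Cf (P j)) := by
        simp [aff]; ring
      rw [hval]
      rcases Finset.mem_insert.1 hj with rfl | hj
      · rw [hfu]; norm_num
      rcases Finset.mem_insert.1 hj with rfl | hj
      · linarith
      · rw [Finset.mem_singleton.1 hj, hfw]; norm_num
    have h2' : aff (-Af) (-Bf) (-Cf) x = -(aff Af Bf Cf x) := by simp [aff]; ring
    rw [h2'] at h2
    have hx0 : aff Af Bf Cf x = 0 := le_antisymm (by linarith) h1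
    exact mcConv_face t Af Bf Cf σ (({u, c, w} : Finset (Fin n)) ∩ σ)
      (fun j hj => hfA j (hσ hj)) hxσ hx0
      (fun j hj h0 => Finset.mem_inter.2
        ⟨by rcases hface j (hσ hj) h0 with rfl | rfl <;> simp, hj⟩)

end

section
variable {n : ℕ}

lemma exists_succ' {V : Finset (Fin n)} {c j0 : Fin n} (hj0 : j0 ∈ V) (hlt : c < j0) :
    ∃ w, w ∈ V ∧ c < w ∧ ∀ j ∈ V, c < j → w ≤ j := by
  classical
  have hne : (V.filter fun j => c < j).Nonempty := ⟨j0, Finset.mem_filter.2 ⟨hj0, hlt⟩⟩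
  refine ⟨(V.filter fun j => c < j).min' hne, ?_, ?_, ?_⟩
  · exact (Finset.mem_filter.1 ((V.filter fun j => c < j).min'_mem hne)).1
  · exact (Finset.mem_filter.1 ((V.filter fun j => c < j).min'_mem hne)).2
  · intro j hj hcj
    exact Finset.min'_le _ _ (Finset.mem_filter.2 ⟨hj, hcj⟩)

lemma exists_pred' {V : Finset (Fin n)} {c j0 : Fin n} (hj0 : j0 ∈ V) (hlt : j0 < c) :
    ∃ u, u ∈ V ∧ u < c ∧ ∀ j ∈ V, j < c → j ≤ u := by
  classical
  have hne : (V.filter fun j => j < c).Nonempty := ⟨j0, Finset.mem_filter.2 ⟨hj0, hlt⟩⟩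
  refine ⟨(V.filter fun j => j < c).max' hne, ?_, ?_, ?_⟩
  · exact (Finset.mem_filter.1 ((V.filter fun j => j < c).max'_mem hne)).1
  · exact (Finset.mem_filter.1 ((V.filter fun j => j < c).max'_mem hne)).2
  · intro j hj hcj
    exact Finset.le_max' (V.filter fun j => j < c) j (Finset.mem_filter.2 ⟨hj, hcj⟩)

lemma ear_exists (L R : Finset (Finset (Fin n)))
    (hLR : ¬ ∃ l₁ l₂ r₁ r₂ : Fin n,
      ({l₁, l₂} : Finset (Fin n)) ∈ L ∧ ({r₁, r₂} : Finset (Fin n)) ∈ R ∧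
      l₁ < l₂ ∧ r₁ < r₂ ∧ r₁ < l₁ ∧ l₁ < r₂ ∧ r₂ < l₂)
    (V : Finset (Fin n)) (hV : 3 ≤ V.card)
    (hP : ∀ a b : Fin n, PolygonEdge V a b → CondLe L a b ∧ CondRe R a b) :
    ∃ u c w : Fin n, u ∈ V ∧ c ∈ V ∧ w ∈ V ∧ u < w ∧ CondLe L u w ∧ CondRe R u w ∧
      ((u < c ∧ c < w ∧ (∀ j ∈ V, j ≠ c → ¬(u < j ∧ j < w)))
       ∨ (w < c ∧ (∀ j ∈ V, j ≤ c) ∧ (∀ j ∈ V, u ≤ j) ∧ (∀ j ∈ V, j ≠ c → j ≤ w))) := by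
  classical
  have hne : V.Nonempty := Finset.card_pos.1 (by omega)
  set a := V.min' hne with ha_def
  set b := V.max' hne with hb_def
  have haV : a ∈ V := V.min'_mem hne
  have hbV : b ∈ V := V.max'_mem hne
  have hab : a < b := Finset.min'_lt_max'_of_card V (by omega)
  -- an interior vertex exists
  have hmid : ∃ m, m ∈ V ∧ a < m ∧ m < b := by
    have : ((V.erase a).erase b).Nonempty := by
      apply Finset.card_pos.1
      have h1 := Finset.card_erase_of_mem haV
      have h2 := Finset.card_erase_of_mem
        (Finset.mem_erase.2 ⟨ne_of_gt hab, hbV⟩)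
      omega
    obtain ⟨m, hm⟩ := this
    rw [Finset.mem_erase, Finset.mem_erase] at hm
    obtain ⟨hmb, hma, hmV⟩ := hm
    exact ⟨m, hmV, lt_of_le_of_ne (V.min'_le m hmV) (Ne.symm hma),
      lt_of_le_of_ne (V.le_max' m hmV) hmb⟩
  obtain ⟨m0, hm0V, ham0, hm0b⟩ := hmid
  obtain ⟨pb, hpbV, hpbb, hpbmax⟩ := exists_pred' hm0V hm0b
  have hapb : a < pb := lt_of_lt_of_le ham0 (hpbmax m0 hm0V hm0b)
  have hedge_ab : CondLe L a b ∧ CondRe R a b :=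
    hP a b ⟨haV, hbV, hab, Or.inr fun c hc => ⟨V.min'_le c hc, V.le_max' c hc⟩⟩
  -- Lbad / Rbad
  by_contra hno
  -- uncuttability of interior ears
  have uncut_int : ∀ c u w, c ∈ V → u ∈ V → w ∈ V → u < c → c < w →
      (∀ j ∈ V, j ≠ c → ¬(u < j ∧ j < w)) → ¬(CondLe L u w ∧ CondRe R u w) := by
    intro c u w hc hu hw huc hcw hcons hcond
    exact hno ⟨u, c, w, hu, hc, hw, lt_trans huc hcw, hcond.1, hcond.2,
      Or.inl ⟨huc, hcw, hcons⟩⟩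
  have uncut_top : ¬(CondLe L a pb ∧ CondRe R a pb) := by
    intro hcond
    refine hno ⟨a, b, pb, haV, hbV, hpbV, hapb, hcond.1, hcond.2,
      Or.inr ⟨hpbb, fun j hj => V.le_max' j hj, fun j hj => V.min'_le j hj, ?_⟩⟩
    intro j hj hjb
    exact hpbmax j hj (lt_of_le_of_ne (V.le_max' j hj) hjb)
  -- l₂ of a pattern starting at an interior vertex stays within b
  have hl2b : ∀ c l₂, c ∈ V → a < c → c < b → ({c, l₂} : Finset (Fin n)) ∈ L → c < l₂ →
      l₂ ≤ b := by
    intro c l₂ hc hac hcb hmem hcl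
    by_contra hbl
    exact hedge_ab.1 ⟨c, l₂, hmem, hcl, hac, hcb, lt_of_not_ge hbl⟩
  -- every uncuttable interior ear is Lbad or Rbad
  have claim1 : ∀ c, c ∈ V → a < c → c < b →
      (∃ l₂, ({c, l₂} : Finset (Fin n)) ∈ L ∧ c < l₂ ∧ ∃ w', w' ∈ V ∧ c < w' ∧ w' < l₂) ∨
      (∃ r₁, ({r₁, c} : Finset (Fin n)) ∈ R ∧ r₁ < c ∧ ∃ u', u' ∈ V ∧ u' < c ∧ r₁ < u') := by
    intro c hcV hac hcb
    obtain ⟨u, huV, huc, humax⟩ := exists_pred' haV hac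
    obtain ⟨w, hwV, hcw, hwmin⟩ := exists_succ' hbV hcb
    have hcons_uc : ∀ j ∈ V, ¬(u < j ∧ j < c) := by
      intro j hj ⟨h1, h2⟩; exact absurd (humax j hj h2) (not_le.2 h1)
    have hcons_cw : ∀ j ∈ V, ¬(c < j ∧ j < w) := by
      intro j hj ⟨h1, h2⟩; exact absurd (hwmin j hj h1) (not_le.2 h2)
    have hedge_uc := hP u c ⟨huV, hcV, huc, Or.inl hcons_uc⟩
    have hedge_cw := hP c w ⟨hcV, hwV, hcw, Or.inl hcons_cw⟩
    have hcons : ∀ j ∈ V, j ≠ c → ¬(u < j ∧ j < w) := by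
      intro j hj hjc ⟨h1, h2⟩
      rcases lt_trichotomy j c with h | h | h
      · exact hcons_uc j hj ⟨h1, h⟩
      · exact hjc h
      · exact hcons_cw j hj ⟨h, h2⟩
    rcases not_and_or.1 (uncut_int c u w hcV huV hwV huc hcw hcons) with hL | hR
    · left
      simp only [CondLe, not_not] at hL
      obtain ⟨l₁, l₂, hmem, h12, hul, hlw, hwl⟩ := hL
      have hl₁c : l₁ = c := by
        rcases lt_trichotomy l₁ c with h | h | h
        · exact absurd ⟨l₁, l₂, hmem, h12, hul, h, lt_trans hcw hwl⟩ hedge_uc.1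
        · exact h
        · exact absurd ⟨l₁, l₂, hmem, h12, h, hlw, hwl⟩ hedge_cw.1
      subst hl₁c
      exact ⟨l₂, hmem, h12, w, hwV, hcw, hwl⟩
    · right
      simp only [CondRe, not_not] at hR
      obtain ⟨r₁, r₂, hmem, h12, hru, hur, hrw⟩ := hR
      have hr₂c : r₂ = c := by
        rcases lt_trichotomy r₂ c with h | h | h
        · exact absurd ⟨r₁, r₂, hmem, h12, hru, hur, h⟩ hedge_uc.2
        · exact h
        · exact absurd ⟨r₁, r₂, hmem, h12, lt_trans hru huc, h, hrw⟩ hedge_cw.2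
      subst hr₂c
      exact ⟨r₁, hmem, h12, u, huV, huc, hru⟩
  -- the failed top ear provides an interior Lbad vertex
  have claim_start : ∃ c, c ∈ V ∧ a < c ∧ c < b ∧
      ∃ l₂, ({c, l₂} : Finset (Fin n)) ∈ L ∧ c < l₂ ∧ ∃ w', w' ∈ V ∧ c < w' ∧ w' < l₂ := by
    rcases not_and_or.1 uncut_top with hL | hR
    · simp only [CondLe, not_not] at hL
      obtain ⟨l₁, l₂, hmem, h12, hal, hlpb, hpbl⟩ := hL
      have hl₁b : l₁ < b := lt_trans hlpb hpbb
      have hl2b' : l₂ ≤ b := by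
        by_contra hbl
        exact hedge_ab.1 ⟨l₁, l₂, hmem, h12, hal, hl₁b, lt_of_not_ge hbl⟩
      have hl₁V : l₁ ∈ V := by
        by_contra hnot
        obtain ⟨u', hu'V, hu'l, hu'max⟩ := exists_pred' haV hal
        obtain ⟨w', hw'V, hlw', hw'min⟩ := exists_succ' hpbV hlpb
        have hcons : ∀ j ∈ V, ¬(u' < j ∧ j < w') := by
          intro j hj ⟨h1, h2⟩
          rcases lt_trichotomy j l₁ with h | h | h
          · exact absurd (hu'max j hj h) (not_le.2 h1)
          · exact hnot (h ▸ hj)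
          · exact absurd (hw'min j hj h) (not_le.2 h2)
        have hedge := hP u' w' ⟨hu'V, hw'V, lt_trans hu'l hlw', Or.inl hcons⟩
        exact hedge.1 ⟨l₁, l₂, hmem, h12, hu'l, hlw',
          lt_of_le_of_lt (hw'min pb hpbV hlpb) hpbl⟩
      exact ⟨l₁, hl₁V, hal, hl₁b, l₂, hmem, h12, pb, hpbV, hlpb, hpbl⟩
    · exfalso
      simp only [CondRe, not_not] at hR
      obtain ⟨r₁, r₂, hmem, h12, hra, har, hrpb⟩ := hR
      exact hedge_ab.2 ⟨r₁, r₂, hmem, h12, hra, har, lt_trans hrpb hpbb⟩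
  -- Lbad propagates to the right, giving a contradiction
  have prop : ∀ k : ℕ, ∀ c, c ∈ V → a < c → c < b →
      (∃ l₂, ({c, l₂} : Finset (Fin n)) ∈ L ∧ c < l₂ ∧ ∃ w', w' ∈ V ∧ c < w' ∧ w' < l₂) →
      (V.filter fun j => c < j).card ≤ k → False := by
    intro k
    induction k with
    | zero =>
      intro c hc hac hcb hbad hcard
      have : b ∈ V.filter fun j => c < j := Finset.mem_filter.2 ⟨hbV, hcb⟩
      have := Finset.card_pos.2 ⟨b, this⟩
      omega
    | succ k ih =>
      intro c hc hac hcb hbad hcard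
      obtain ⟨l₂, hmem, hcl, w', hw'V, hcw', hw'l⟩ := hbad
      have hl₂b : l₂ ≤ b := hl2b c l₂ hc hac hcb hmem hcl
      obtain ⟨d, hdV, hcd, hdmin⟩ := exists_succ' hw'V hcw'
      have hdl : d < l₂ := lt_of_le_of_lt (hdmin w' hw'V hcw') hw'l
      have hdb : d < b := lt_of_lt_of_le hdl hl₂b
      rcases claim1 d hdV (lt_trans hac hcd) hdb with hLd | hRd
      · apply ih d hdV (lt_trans hac hcd) hdb hLd
        have hsub : (V.filter fun j => d < j) ⊆ V.filter fun j => c < j := by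
          intro j hj
          rw [Finset.mem_filter] at hj ⊢
          exact ⟨hj.1, lt_trans hcd hj.2⟩
        have hdin : d ∈ V.filter fun j => c < j := Finset.mem_filter.2 ⟨hdV, hcd⟩
        have hdnotin : d ∉ V.filter fun j => d < j := by
          rw [Finset.mem_filter]; rintro ⟨_, h⟩; exact lt_irrefl d h
        have := Finset.card_lt_card (Finset.ssubset_iff_of_subset hsub |>.2 ⟨d, hdin, hdnotin⟩)
        omega
      · obtain ⟨r₁, hrmem, hr₁d, u', hu'V, hu'd, hru'⟩ := hRd
        have hu'c : u' ≤ c := by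
          by_contra hcu
          exact absurd (hdmin u' hu'V (lt_of_not_ge hcu)) (not_le.2 hu'd)
        exact hLR ⟨c, l₂, r₁, d, hmem, hrmem, hcl, hr₁d,
          lt_of_lt_of_le hru' hu'c, hcd, hdl⟩
  obtain ⟨c, hc, hac, hcb, hbad⟩ := claim_start
  exact prop _ c hc hac hcb hbad le_rfl

end

section
variable {n : ℕ}

lemma glue_interior (t : Fin n → ℝ) (ht : StrictMono t) (V : Finset (Fin n)) (u c w : Fin n)
    (hu : u ∈ V) (hc : c ∈ V) (hw : w ∈ V) (huc : u < c) (hcw : c < w)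
    (hcons : ∀ j ∈ V, j ≠ c → ¬(u < j ∧ j < w)) :
    (mcConv 2 t V ⊆ mcConv 2 t (V.erase c) ∪ mcConv 2 t {u, c, w}) ∧
    (∀ σ : Finset (Fin n), σ ⊆ V.erase c → ¬ Overlap 2 t {u, c, w} σ) := by
  classical
  have htu_c : t u < t c := ht huc
  have htc_w : t c < t w := ht hcw
  have hsides : ∀ j ∈ V.erase c, t j ≤ t u ∨ t w ≤ t j := by
    intro j hj
    obtain ⟨hjc, hjV⟩ := Finset.mem_erase.1 hj
    rcases le_or_gt j u with h | h
    · exact Or.inl (ht.le_iff_le.2 h)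
    · rcases le_or_gt w j with h' | h'
      · exact Or.inr (ht.le_iff_le.2 h')
      · exact absurd ⟨h, h'⟩ (hcons j hjV hjc)
  have hVeq : insert c (V.erase c) = V := Finset.insert_erase hc
  have H := glue t (V.erase c) c u w
    (Finset.mem_erase.2 ⟨ne_of_lt huc, hu⟩) (Finset.mem_erase.2 ⟨ne_of_gt hcw, hw⟩)
    (Finset.notMem_erase c V)
    (-(t u + t w)) 1 (t u * t w) (-(t u + t c)) 1 (t u * t c) (-(t c + t w)) 1 (t c * t w)
    (by intro j hj
        rw [aff_para]
        rcases hsides j hj with h | h <;> nlinarith)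
    (by intro j hj h0
        rw [aff_para] at h0
        rcases mul_eq_zero.1 h0 with h | h
        · exact Or.inl (ht.injective (by linarith))
        · exact Or.inr (ht.injective (by linarith)))
    (by rw [aff_para]; nlinarith)
    (by rw [aff_para]; ring_nf)
    (by rw [aff_para]; ring_nf)
    (by intro j hj
        rw [aff_para]
        rcases hsides j hj with h | h <;> nlinarith)
    (by rw [aff_para]; ring_nf)
    (by intro j hj
        rw [aff_para]
        rcases hsides j hj with h | h <;> nlinarith)
    (by rw [aff_para]; ring_nf)
    (by intro x hf hg hh
        simp only [aff] at hf hg hh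
        have h1 : x 1 = (t u + t w) * x 0 - t u * t w := by linarith
        have h2 : 0 ≤ (t w - t c) * (x 0 - t u) := by nlinarith
        have h3 : 0 ≤ (t c - t u) * (t w - x 0) := by nlinarith
        exact mem_segment_para (ht (lt_trans huc hcw)) x h1
          (by nlinarith) (by nlinarith))
  rwa [hVeq] at H

lemma glue_top (t : Fin n → ℝ) (ht : StrictMono t) (V : Finset (Fin n)) (u w c : Fin n)
    (hu : u ∈ V) (hw : w ∈ V) (hc : c ∈ V) (huw : u < w) (hwc : w < c)
    (hmin : ∀ j ∈ V, u ≤ j) (hsnd : ∀ j ∈ V, j ≠ c → j ≤ w) :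
    (mcConv 2 t V ⊆ mcConv 2 t (V.erase c) ∪ mcConv 2 t {u, c, w}) ∧
    (∀ σ : Finset (Fin n), σ ⊆ V.erase c → ¬ Overlap 2 t {u, c, w} σ) := by
  classical
  have htu_w : t u < t w := ht huw
  have htw_c : t w < t c := ht hwc
  have hbounds : ∀ j ∈ V.erase c, t u ≤ t j ∧ t j ≤ t w := by
    intro j hj
    obtain ⟨hjc, hjV⟩ := Finset.mem_erase.1 hj
    exact ⟨ht.le_iff_le.2 (hmin j hjV), ht.le_iff_le.2 (hsnd j hjV hjc)⟩
  have hVeq : insert c (V.erase c) = V := Finset.insert_erase hc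
  have H := glue t (V.erase c) c u w
    (Finset.mem_erase.2 ⟨ne_of_lt (lt_trans huw hwc), hu⟩)
    (Finset.mem_erase.2 ⟨ne_of_lt hwc, hw⟩)
    (Finset.notMem_erase c V)
    (t u + t w) (-1) (-(t u * t w)) (t u + t c) (-1) (-(t u * t c))
    (-(t w + t c)) 1 (t w * t c)
    (by intro j hj
        rw [aff_para_neg]
        obtain ⟨h1, h2⟩ := hbounds j hj
        nlinarith)
    (by intro j hj h0
        rw [aff_para_neg] at h0
        have := neg_eq_zero.1 h0
        rcases mul_eq_zero.1 this with h | h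
        · exact Or.inl (ht.injective (by linarith))
        · exact Or.inr (ht.injective (by linarith)))
    (by rw [aff_para_neg]; nlinarith)
    (by rw [aff_para_neg]; ring_nf)
    (by rw [aff_para_neg]; ring_nf)
    (by intro j hj
        rw [aff_para_neg]
        obtain ⟨h1, h2⟩ := hbounds j hj
        nlinarith)
    (by rw [aff_para_neg]; ring_nf)
    (by intro j hj
        rw [aff_para]
        obtain ⟨h1, h2⟩ := hbounds j hj
        nlinarith)
    (by rw [aff_para]; ring_nf)
    (by intro x hf hg hh
        simp only [aff] at hf hg hh
        have h1 : x 1 = (t u + t w) * x 0 - t u * t w := by linarith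
        have h2 : 0 ≤ (t c - t w) * (x 0 - t u) := by nlinarith
        have h3 : 0 ≤ (t c - t u) * (t w - x 0) := by nlinarith
        exact mem_segment_para htu_w x h1 (by nlinarith) (by nlinarith))
  rwa [hVeq] at H

end

section
variable {n : ℕ}

lemma not_overlap_symm {d : ℕ} {t : Fin n → ℝ} {σ τ : Finset (Fin n)}
    (h : ¬ Overlap d t σ τ) : ¬ Overlap d t τ σ := by
  rw [Overlap, not_not] at h ⊢
  rw [Set.inter_comm, Finset.inter_comm]
  exact h

lemma polygonEdge_card3 {V : Finset (Fin n)} (h3 : V.card = 3) {a b : Fin n}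
    (ha : a ∈ V) (hb : b ∈ V) (hab : a < b) : PolygonEdge V a b := by
  classical
  refine ⟨ha, hb, hab, ?_⟩
  by_cases hex : ∃ z ∈ V, a < z ∧ z < b
  · obtain ⟨z, hz, haz, hzb⟩ := hex
    right
    have hsub : ({a, z, b} : Finset (Fin n)) ⊆ V := by
      intro x hx
      simp only [Finset.mem_insert, Finset.mem_singleton] at hx
      rcases hx with rfl | rfl | rfl <;> assumption
    have hcard : ({a, z, b} : Finset (Fin n)).card = 3 :=
      Finset.card_eq_three.2 ⟨a, z, b, ne_of_lt haz, ne_of_lt hab, ne_of_lt hzb, rfl⟩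
    have hVeq : ({a, z, b} : Finset (Fin n)) = V :=
      Finset.eq_of_subset_of_card_le hsub (by omega)
    intro x hx
    rw [← hVeq] at hx
    simp only [Finset.mem_insert, Finset.mem_singleton] at hx
    rcases hx with rfl | rfl | rfl
    exacts [⟨le_rfl, hab.le⟩, ⟨haz.le, hzb.le⟩, ⟨hab.le, le_rfl⟩]
  · left
    intro x hx hcon
    exact hex ⟨x, hx, hcon⟩

lemma main_aux (t : Fin n → ℝ) (ht : StrictMono t) (L R : Finset (Finset (Fin n)))
    (hLR : ¬ ∃ l₁ l₂ r₁ r₂ : Fin n,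
      ({l₁, l₂} : Finset (Fin n)) ∈ L ∧ ({r₁, r₂} : Finset (Fin n)) ∈ R ∧
      l₁ < l₂ ∧ r₁ < r₂ ∧ r₁ < l₁ ∧ l₁ < r₂ ∧ r₂ < l₂) :
    ∀ k : ℕ, ∀ V : Finset (Fin n), V.card ≤ k → 3 ≤ V.card →
    (∀ a b : Fin n, PolygonEdge V a b → CondLe L a b ∧ CondRe R a b) →
    ∃ T : Finset (Finset (Fin n)), IsTriangulation 2 t V T ∧ UsesAllVertices V T ∧
      ∀ ρ ∈ T, ∀ a b : Fin n, a ∈ ρ → b ∈ ρ → a < b →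
        CondLe L a b ∧ CondRe R a b := by
  classical
  intro k
  induction k with
  | zero => intro V hk h3 _; omega
  | succ k ih =>
    intro V hk h3 hP
    rcases eq_or_lt_of_le h3 with h3' | h4
    · -- base case |V| = 3
      refine ⟨{V}, ⟨?_, ?_, ?_⟩, ?_, ?_⟩
      · intro σ hσ
        rw [Finset.mem_singleton] at hσ
        subst hσ
        exact ⟨h3'.symm, subset_rfl⟩
      · intro σ hσ τ hτ hne
        rw [Finset.mem_singleton] at hσ hτ
        subst hσ; subst hτ
        exact absurd rfl hne
      · intro p hp
        exact ⟨V, Finset.mem_singleton_self V, hp⟩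
      · intro a ha
        exact ⟨V, Finset.mem_singleton_self V, ha⟩
      · intro ρ hρ a b haρ hbρ hab
        rw [Finset.mem_singleton] at hρ
        subst hρ
        exact hP a b (polygonEdge_card3 h3'.symm haρ hbρ hab)
    · -- inductive step |V| ≥ 4
      obtain ⟨u, c, w, hu, hc, hw, huw, hCle, hCre, hcase⟩ := ear_exists L R hLR V h3 hP
      rcases hcase with ⟨huc, hcw, hcons⟩ | ⟨hwc, hmax, hmin, hsnd⟩
      · -- interior ear
        set A := V.erase c with hA
        have hcA : c ∉ A := Finset.notMem_erase c V
        have huA : u ∈ A := Finset.mem_erase.2 ⟨ne_of_lt huc, hu⟩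
        have hwA : w ∈ A := Finset.mem_erase.2 ⟨ne_of_gt hcw, hw⟩
        have hcardA : A.card = V.card - 1 := Finset.card_erase_of_mem hc
        have hP' : ∀ a b : Fin n, PolygonEdge A a b → CondLe L a b ∧ CondRe R a b := by
          rintro a b ⟨haA, hbA, hab, hdisj⟩
          have haV : a ∈ V := (Finset.mem_erase.1 haA).2
          have hbV : b ∈ V := (Finset.mem_erase.1 hbA).2
          have hac : a ≠ c := (Finset.mem_erase.1 haA).1
          have hbc : b ≠ c := (Finset.mem_erase.1 hbA).1
          rcases hdisj with hconsec | hminmax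
          · by_cases hbet : a < c ∧ c < b
            · have hau : a = u := by
                apply le_antisymm
                · by_contra hcon
                  exact hcons a haV hac ⟨lt_of_not_ge hcon, lt_trans hbet.1 hcw⟩
                · by_contra hcon
                  exact hconsec u huA ⟨lt_of_not_ge hcon, lt_trans huc hbet.2⟩
              have haw : a < w := by rw [hau]; exact lt_trans huc hcw
              have hub : u < b := by rw [← hau]; exact hab
              have hbw : b = w := by
                apply le_antisymm
                · by_contra hcon
                  exact hconsec w hwA ⟨haw, lt_of_not_ge hcon⟩
                · by_contra hcon
                  exact hcons b hbV hbc ⟨hub, lt_of_not_ge hcon⟩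
              subst hau; subst hbw
              exact ⟨hCle, hCre⟩
            · refine hP a b ⟨haV, hbV, hab, Or.inl ?_⟩
              intro j hj hcon
              by_cases hjc : j = c
              · subst hjc; exact hbet hcon
              · exact hconsec j (Finset.mem_erase.2 ⟨hjc, hj⟩) hcon
          · refine hP a b ⟨haV, hbV, hab, Or.inr ?_⟩
            intro j hj
            by_cases hjc : j = c
            · subst hjc
              exact ⟨le_trans (hminmax u huA).1 huc.le, le_trans hcw.le (hminmax w hwA).2⟩
            · exact hminmax j (Finset.mem_erase.2 ⟨hjc, hj⟩)
        obtain ⟨T', hT'tri, hT'use, hT'edge⟩ := ih A (by omega) (by omega) hP'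
        obtain ⟨hcov, hnov⟩ := glue_interior t ht V u c w hu hc hw huc hcw hcons
        set Δ : Finset (Fin n) := {u, c, w} with hΔ
        have hΔcard : Δ.card = 3 :=
          Finset.card_eq_three.2 ⟨u, c, w, ne_of_lt huc,
            ne_of_lt (lt_trans huc hcw), ne_of_lt hcw, rfl⟩
        have hΔV : Δ ⊆ V := by
          intro x hx
          simp only [hΔ, Finset.mem_insert, Finset.mem_singleton] at hx
          rcases hx with rfl | rfl | rfl <;> assumption
        have edge_uc : CondLe L u c ∧ CondRe R u c :=
          hP u c ⟨hu, hc, huc, Or.inl (by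
            rintro j hj ⟨h1, h2⟩
            exact hcons j hj (ne_of_lt h2) ⟨h1, lt_trans h2 hcw⟩)⟩
        have edge_cw : CondLe L c w ∧ CondRe R c w :=
          hP c w ⟨hc, hw, hcw, Or.inl (by
            rintro j hj ⟨h1, h2⟩
            exact hcons j hj (ne_of_gt h1) ⟨lt_trans huc h1, h2⟩)⟩
        refine ⟨insert Δ T', ⟨?_, ?_, ?_⟩, ?_, ?_⟩
        · intro σ hσ
          rcases Finset.mem_insert.1 hσ with rfl | hσ
          · exact ⟨hΔcard, hΔV⟩
          · obtain ⟨h1, h2⟩ := hT'tri.1 σ hσ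
            exact ⟨h1, h2.trans (Finset.erase_subset c V)⟩
        · intro σ hσ τ hτ hne
          rcases Finset.mem_insert.1 hσ with rfl | hσ
          · rcases Finset.mem_insert.1 hτ with rfl | hτ
            · exact absurd rfl hne
            · exact hnov τ (hT'tri.1 τ hτ).2
          · rcases Finset.mem_insert.1 hτ with rfl | hτ
            · exact not_overlap_symm (hnov σ (hT'tri.1 σ hσ).2)
            · exact hT'tri.2.1 σ hσ τ hτ hne
        · intro p hp
          rcases hcov hp with h | h
          · obtain ⟨σ, hσ, hpσ⟩ := hT'tri.2.2 p h
            exact ⟨σ, Finset.mem_insert_of_mem hσ, hpσ⟩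
          · exact ⟨Δ, Finset.mem_insert_self _ _, h⟩
        · intro a ha
          by_cases hac : a = c
          · exact ⟨Δ, Finset.mem_insert_self _ _, by subst hac; simp [hΔ]⟩
          · obtain ⟨σ, hσ, h⟩ := hT'use a (Finset.mem_erase.2 ⟨hac, ha⟩)
            exact ⟨σ, Finset.mem_insert_of_mem hσ, h⟩
        · intro ρ hρ a b haρ hbρ hab
          rcases Finset.mem_insert.1 hρ with rfl | hρ
          · simp only [hΔ, Finset.mem_insert, Finset.mem_singleton] at haρ hbρ
            rcases haρ with rfl | rfl | rfl <;> rcases hbρ with rfl | rfl | rfl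
            · exact absurd hab (lt_irrefl _)
            · exact edge_uc
            · exact ⟨hCle, hCre⟩
            · exact absurd hab (lt_asymm huc)
            · exact absurd hab (lt_irrefl _)
            · exact edge_cw
            · exact absurd hab (lt_asymm huw)
            · exact absurd hab (lt_asymm hcw)
            · exact absurd hab (lt_irrefl _)
          · exact hT'edge ρ hρ a b haρ hbρ hab
      · -- top ear
        set A := V.erase c with hA
        have hcA : c ∉ A := Finset.notMem_erase c V
        have huA : u ∈ A := Finset.mem_erase.2 ⟨ne_of_lt (lt_trans huw hwc), hu⟩
        have hwA : w ∈ A := Finset.mem_erase.2 ⟨ne_of_lt hwc, hw⟩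
        have hcardA : A.card = V.card - 1 := Finset.card_erase_of_mem hc
        have hP' : ∀ a b : Fin n, PolygonEdge A a b → CondLe L a b ∧ CondRe R a b := by
          rintro a b ⟨haA, hbA, hab, hdisj⟩
          have haV : a ∈ V := (Finset.mem_erase.1 haA).2
          have hbV : b ∈ V := (Finset.mem_erase.1 hbA).2
          have hac : a ≠ c := (Finset.mem_erase.1 haA).1
          have hbc : b ≠ c := (Finset.mem_erase.1 hbA).1
          rcases hdisj with hconsec | hminmax
          · refine hP a b ⟨haV, hbV, hab, Or.inl ?_⟩
            intro j hj hcon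
            have hjb : j < c := lt_of_lt_of_le hcon.2 ((hsnd b hbV hbc).trans hwc.le)
            exact hconsec j (Finset.mem_erase.2 ⟨ne_of_lt hjb, hj⟩) hcon
          · have hau : a = u := le_antisymm
              (by
                by_contra hcon
                exact absurd (hminmax u huA).1 (not_le.2 (lt_of_not_ge hcon)))
              (hmin a haV)
            have hbw : b = w := le_antisymm (hsnd b hbV hbc)
              (by
                by_contra hcon
                exact absurd (hminmax w hwA).2 (not_le.2 (lt_of_not_ge hcon)))
            subst hau; subst hbw
            exact ⟨hCle, hCre⟩
        obtain ⟨T', hT'tri, hT'use, hT'edge⟩ := ih A (by omega) (by omega) hP'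
        obtain ⟨hcov, hnov⟩ := glue_top t ht V u w c hu hw hc huw hwc hmin hsnd
        set Δ : Finset (Fin n) := {u, c, w} with hΔ
        have hΔcard : Δ.card = 3 :=
          Finset.card_eq_three.2 ⟨u, c, w, ne_of_lt (lt_trans huw hwc),
            ne_of_lt huw, ne_of_gt hwc, rfl⟩
        have hΔV : Δ ⊆ V := by
          intro x hx
          simp only [hΔ, Finset.mem_insert, Finset.mem_singleton] at hx
          rcases hx with rfl | rfl | rfl <;> assumption
        have edge_uc : CondLe L u c ∧ CondRe R u c :=
          hP u c ⟨hu, hc, lt_trans huw hwc, Or.inr fun j hj => ⟨hmin j hj, hmax j hj⟩⟩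
        have edge_wc : CondLe L w c ∧ CondRe R w c :=
          hP w c ⟨hw, hc, hwc, Or.inl (by
            rintro j hj ⟨h1, h2⟩
            exact absurd (hsnd j hj (ne_of_lt h2)) (not_le.2 h1))⟩
        refine ⟨insert Δ T', ⟨?_, ?_, ?_⟩, ?_, ?_⟩
        · intro σ hσ
          rcases Finset.mem_insert.1 hσ with rfl | hσ
          · exact ⟨hΔcard, hΔV⟩
          · obtain ⟨h1, h2⟩ := hT'tri.1 σ hσ
            exact ⟨h1, h2.trans (Finset.erase_subset c V)⟩
        · intro σ hσ τ hτ hne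
          rcases Finset.mem_insert.1 hσ with rfl | hσ
          · rcases Finset.mem_insert.1 hτ with rfl | hτ
            · exact absurd rfl hne
            · exact hnov τ (hT'tri.1 τ hτ).2
          · rcases Finset.mem_insert.1 hτ with rfl | hτ
            · exact not_overlap_symm (hnov σ (hT'tri.1 σ hσ).2)
            · exact hT'tri.2.1 σ hσ τ hτ hne
        · intro p hp
          rcases hcov hp with h | h
          · obtain ⟨σ, hσ, hpσ⟩ := hT'tri.2.2 p h
            exact ⟨σ, Finset.mem_insert_of_mem hσ, hpσ⟩
          · exact ⟨Δ, Finset.mem_insert_self _ _, h⟩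
        · intro a ha
          by_cases hac : a = c
          · exact ⟨Δ, Finset.mem_insert_self _ _, by subst hac; simp [hΔ]⟩
          · obtain ⟨σ, hσ, h⟩ := hT'use a (Finset.mem_erase.2 ⟨hac, ha⟩)
            exact ⟨σ, Finset.mem_insert_of_mem hσ, h⟩
        · intro ρ hρ a b haρ hbρ hab
          rcases Finset.mem_insert.1 hρ with rfl | hρ
          · simp only [hΔ, Finset.mem_insert, Finset.mem_singleton] at haρ hbρ
            rcases haρ with rfl | rfl | rfl <;> rcases hbρ with rfl | rfl | rfl
            · exact absurd hab (lt_irrefl _)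
            · exact edge_uc
            · exact ⟨hCle, hCre⟩
            · exact absurd hab (lt_asymm (lt_trans huw hwc))
            · exact absurd hab (lt_irrefl _)
            · exact absurd hab (lt_asymm hwc)
            · exact absurd hab (lt_asymm huw)
            · exact edge_wc
            · exact absurd hab (lt_irrefl _)
          · exact hT'edge ρ hρ a b haρ hbρ hab

end

end Aux

/-- **Proposition (the case `M = ∅`).** Let `L, R` be sets of edges on `γ₂` satisfying
(LR). If `V ⊆ [n]` with `|V| ≥ 3` is such that every edge of the convex polygon
`P = conv(V)` satisfies (Le) and (Re), then there is a triangulation `T` of `P` with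
vertex set `V` all of whose edges satisfy (Le) and (Re). -/
theorem exists_triangulation_avoiding_patterns_no_middle
    (n : ℕ) (t : Fin n → ℝ) (ht : StrictMono t)
    (L R : Finset (Finset (Fin n)))
    (hL : ∀ e ∈ L, e.card = 2) (hR : ∀ e ∈ R, e.card = 2)
    (hLR : ¬ ∃ l₁ l₂ r₁ r₂ : Fin n,
      ({l₁, l₂} : Finset (Fin n)) ∈ L ∧ ({r₁, r₂} : Finset (Fin n)) ∈ R ∧
      l₁ < l₂ ∧ r₁ < r₂ ∧ r₁ < l₁ ∧ l₁ < r₂ ∧ r₂ < l₂)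
    (V : Finset (Fin n)) (hV : 3 ≤ V.card)
    (hP : ∀ a b : Fin n, PolygonEdge V a b → CondLe L a b ∧ CondRe R a b) :
    ∃ T : Finset (Finset (Fin n)),
      IsTriangulation 2 t V T ∧ UsesAllVertices V T ∧
      ∀ ρ ∈ T, ∀ a b : Fin n, a ∈ ρ → b ∈ ρ → a < b →
        CondLe L a b ∧ CondRe R a b := by
  classical
  exact main_aux t ht L R hLR V.card V le_rfl hV hP
end

section
/- Let A be a finite set of at least D+1 points on the moment curve γ_D in ℝ^D, let T be a triangulation of conv(A) with vertex set A, and let σ be a k-simplex with vertices in A, where ⌈D/2⌉ ≤ k ≤ D. If every face of σ of dimension ⌈D/2⌉ (i.e., every subset of σ of size ⌈D/2⌉+1) is a face of T, then σ itself is a face of T. -/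
open Finset

noncomputable def altLen {n : ℕ} (c : Fin n → ℝ) (x : Fin n) : ℕ :=
  ((Finset.univ.filter (fun y => y < x ∧ c y * c x < 0)).attach.sup
    (fun y => altLen c y.1)) + 1
termination_by x.1
decreasing_by
  exact (Finset.mem_filter.mp y.2).2.1

lemma altLen_eq {n : ℕ} (c : Fin n → ℝ) (x : Fin n) :
    altLen c x = ((Finset.univ.filter (fun y => y < x ∧ c y * c x < 0)).sup (altLen c)) + 1 := by
  conv_lhs => rw [altLen]
  rw [Finset.sup_attach]

lemma one_le_altLen {n : ℕ} (c : Fin n → ℝ) (x : Fin n) : 1 ≤ altLen c x := by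
  rw [altLen_eq]; omega

lemma altLen_lt_of_neg {n : ℕ} {c : Fin n → ℝ} {x y : Fin n} (hxy : x < y)
    (hs : c x * c y < 0) : altLen c x < altLen c y := by
  have hx : x ∈ Finset.univ.filter (fun z => z < y ∧ c z * c y < 0) := by
    simp [hxy, hs]
  have := Finset.le_sup (f := altLen c) hx
  rw [altLen_eq c y]; omega

lemma neg_trans {a b c : ℝ} (h1 : a * b < 0) (h2 : 0 < b * c) : a * c < 0 := by
  rcases lt_trichotomy b 0 with hb | hb | hb
  · have ha : 0 < a := by nlinarith
    have hc : c < 0 := by nlinarith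
    exact mul_neg_of_pos_of_neg ha hc
  · simp [hb] at h1
  · have ha : a < 0 := by nlinarith
    have hc : 0 < c := by nlinarith
    exact mul_neg_of_neg_of_pos ha hc

lemma altLen_le_of_pos {n : ℕ} {c : Fin n → ℝ} {x y : Fin n} (hxy : x < y)
    (hs : 0 < c x * c y) : altLen c x ≤ altLen c y := by
  rw [altLen_eq c x, altLen_eq c y]
  have hsub : Finset.univ.filter (fun z => z < x ∧ c z * c x < 0) ⊆
      Finset.univ.filter (fun z => z < y ∧ c z * c y < 0) := by
    intro z hz
    simp only [Finset.mem_filter, Finset.mem_univ, true_and] at hz ⊢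
    exact ⟨hz.1.trans hxy, neg_trans hz.2 hs⟩
  have := Finset.sup_mono (f := altLen c) hsub
  omega

lemma altLen_pred {n : ℕ} {c : Fin n → ℝ} {x : Fin n} (h : 2 ≤ altLen c x) :
    ∃ y, y < x ∧ c y * c x < 0 ∧ altLen c y + 1 = altLen c x := by
  rw [altLen_eq] at h
  set F := Finset.univ.filter (fun z => z < x ∧ c z * c x < 0) with hF
  have hne : F.Nonempty := by
    by_contra hemp
    rw [Finset.not_nonempty_iff_eq_empty] at hemp
    rw [hemp] at h; simp at h
  obtain ⟨y, hyF, hy⟩ := Finset.exists_mem_eq_sup F hne (altLen c)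
  simp only [hF, Finset.mem_filter, Finset.mem_univ, true_and] at hyF
  exact ⟨y, hyF.1, hyF.2, by rw [altLen_eq c x, ← hy]⟩

lemma lt_of_altLen_lt {n : ℕ} {c : Fin n → ℝ} {x y : Fin n} (hx : c x ≠ 0) (hy : c y ≠ 0)
    (h : altLen c x < altLen c y) : x < y := by
  rcases lt_trichotomy x y with hxy | hxy | hxy
  · exact hxy
  · subst hxy; omega
  · rcases lt_trichotomy (c y * c x) 0 with hs | hs | hs
    · exact absurd (altLen_lt_of_neg hxy hs) (by omega)
    · exact absurd hs (by simp [mul_eq_zero, hx, hy])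
    · exact absurd (altLen_le_of_pos hxy hs) (by omega)

lemma pos_of_altLen_eq {n : ℕ} {c : Fin n → ℝ} {x y : Fin n} (hx : c x ≠ 0) (hy : c y ≠ 0)
    (h : altLen c x = altLen c y) : 0 < c x * c y := by
  rcases lt_trichotomy (c x * c y) 0 with hs | hs | hs
  · rcases lt_trichotomy x y with hxy | hxy | hxy
    · exact absurd (altLen_lt_of_neg hxy hs) (by omega)
    · subst hxy; nlinarith [mul_self_pos.mpr hx]
    · exact absurd (altLen_lt_of_neg hxy (by nlinarith)) (by omega)
  · exact absurd hs (by simp [mul_eq_zero, hx, hy])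
  · exact hs

lemma altLen_parity {n : ℕ} {c : Fin n → ℝ} (Δ : ℕ) :
    ∀ x y : Fin n, c x ≠ 0 → c y ≠ 0 → altLen c y = altLen c x + Δ →
    0 < c x * c y * (-1 : ℝ) ^ Δ := by
  induction Δ with
  | zero => intro x y hx hy h; simpa using pos_of_altLen_eq hx hy h.symm
  | succ d ih =>
    intro x y hx hy h
    have h2 : 2 ≤ altLen c y := by have := one_le_altLen c x; omega
    obtain ⟨y', hy'lt, hy's, hy'len⟩ := altLen_pred h2
    have hy'0 : c y' ≠ 0 := by intro h0; rw [h0] at hy's; simp at hy's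
    have := ih x y' hx hy'0 (by omega)
    have hpow : ((-1:ℝ))^(d+1) = (-1)^d * (-1) := by ring
    rw [hpow]
    nlinarith [sq_nonneg (c y'), mul_self_pos.mpr hy'0]

lemma altLen_parity' {n : ℕ} {c : Fin n → ℝ} {x y : Fin n} (hx : c x ≠ 0) (hy : c y ≠ 0) :
    0 < c x * c y * (-1 : ℝ) ^ (altLen c x + altLen c y) := by
  rcases le_total (altLen c x) (altLen c y) with h | h
  · have hp := altLen_parity (altLen c y - altLen c x) x y hx hy (by omega)
    have he : altLen c x + altLen c y = 2 * altLen c x + (altLen c y - altLen c x) := by omega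
    rw [he, pow_add, pow_mul, neg_one_sq, one_pow, one_mul]
    exact hp
  · have hp := altLen_parity (altLen c x - altLen c y) y x hy hx (by omega)
    have he : altLen c x + altLen c y = 2 * altLen c y + (altLen c x - altLen c y) := by omega
    rw [he, pow_add, pow_mul, neg_one_sq, one_pow, one_mul, mul_comm (c x) (c y)]
    exact hp

lemma exists_altLen_level {n : ℕ} {c : Fin n → ℝ} :
    ∀ (N : ℕ) (x : Fin n), c x ≠ 0 → altLen c x = N →
    ∀ j, 1 ≤ j → j ≤ N → ∃ y, c y ≠ 0 ∧ altLen c y = j := by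
  intro N
  induction N using Nat.strong_induction_on with
  | _ N ih =>
    intro x hx hN j h1 h2
    rcases eq_or_lt_of_le h2 with h | h
    · exact ⟨x, hx, by omega⟩
    · have h2' : 2 ≤ altLen c x := by omega
      obtain ⟨y, _, hys, hylen⟩ := altLen_pred h2'
      have hy0 : c y ≠ 0 := fun h0 => by simp [h0] at hys
      exact ih (N - 1) (by omega) y hy0 (by omega) j h1 (by omega)

lemma sup_altLen_ge {n D : ℕ} (t : Fin n → ℝ) (ht : StrictMono t) (c : Fin n → ℝ)
    (horth : ∀ j ≤ D, ∑ x, c x * (t x) ^ j = 0) (a : Fin n) (ha : c a ≠ 0) :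
    D + 2 ≤ (Finset.univ.filter (fun x => c x ≠ 0)).sup (altLen c) := by
  by_contra hM
  set S := Finset.univ.filter (fun x : Fin n => c x ≠ 0) with hS
  set M := S.sup (altLen c) with hMdef
  push_neg at hM
  have hSmem : ∀ x, x ∈ S ↔ c x ≠ 0 := by intro x; simp [hS]
  have hSa : a ∈ S := (hSmem a).mpr ha
  have hM1 : 1 ≤ M := le_trans (one_le_altLen c a) (Finset.le_sup hSa)
  have hMle : M ≤ D + 1 := by omega
  have hlesup : ∀ x, c x ≠ 0 → altLen c x ≤ M :=
    fun x hx => Finset.le_sup ((hSmem x).mpr hx)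
  obtain ⟨xM, hxM, hMeq⟩ := Finset.exists_mem_eq_sup S ⟨a, hSa⟩ (altLen c)
  have hlevel : ∀ j, 1 ≤ j → j ≤ M → ∃ y, c y ≠ 0 ∧ altLen c y = j := by
    intro j h1 h2
    exact exists_altLen_level M xM ((hSmem xM).mp hxM) hMeq.symm j h1 h2
  -- roots
  set B : ℕ → Finset (Fin n) := fun j => S.filter (fun x => altLen c x ≤ j) with hB
  set C : ℕ → Finset (Fin n) := fun j => S.filter (fun x => j < altLen c x) with hC
  set r : ℕ → ℝ := fun j =>
    if h : (B j).Nonempty ∧ (C j).Nonempty then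
      ((B j).sup' h.1 t + (C j).inf' h.2 t) / 2 else 0 with hr
  have hrprop : ∀ j, 1 ≤ j → j ≤ M - 1 →
      (∀ x, c x ≠ 0 → altLen c x ≤ j → t x < r j) ∧
      (∀ x, c x ≠ 0 → j < altLen c x → r j < t x) := by
    intro j h1 h2
    obtain ⟨yB, hyB0, hyBlen⟩ := hlevel j h1 (by omega)
    have hBne : (B j).Nonempty := ⟨yB, by simp [hB, hSmem, hyB0, hyBlen]⟩
    have hCne : (C j).Nonempty := ⟨xM, by simp [hC, hxM]; omega⟩
    have hrj : r j = ((B j).sup' hBne t + (C j).inf' hCne t) / 2 := by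
      simp only [hr]
      rw [dif_pos ⟨hBne, hCne⟩]
    obtain ⟨xB, hxBm, hxBe⟩ := Finset.exists_mem_eq_sup' hBne t
    obtain ⟨xC, hxCm, hxCe⟩ := Finset.exists_mem_eq_inf' hCne t
    have hxBl : altLen c xB ≤ j := (Finset.mem_filter.mp hxBm).2
    have hxCl : j < altLen c xC := (Finset.mem_filter.mp hxCm).2
    have hxB0 : c xB ≠ 0 := (hSmem _).mp (Finset.mem_filter.mp hxBm).1
    have hxC0 : c xC ≠ 0 := (hSmem _).mp (Finset.mem_filter.mp hxCm).1
    have hlt : (B j).sup' hBne t < (C j).inf' hCne t := by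
      rw [hxBe, hxCe]
      exact ht (lt_of_altLen_lt hxB0 hxC0 (by omega))
    constructor
    · intro x hx hxl
      have hmem : x ∈ B j := by simp [hB, hSmem, hx, hxl]
      have := Finset.le_sup' t hmem
      rw [hrj]; linarith
    · intro x hx hxl
      have hmem : x ∈ C j := by simp [hC, hSmem, hx, hxl]
      have := Finset.inf'_le t hmem
      rw [hrj]; linarith
  -- polynomial
  set Q : Polynomial ℝ := ∏ j ∈ Finset.Icc 1 (M - 1), (Polynomial.X - Polynomial.C (r j))
    with hQ
  have hdeg : Q.natDegree ≤ M - 1 := by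
    calc Q.natDegree ≤ ∑ j ∈ Finset.Icc 1 (M - 1), (Polynomial.X - Polynomial.C (r j)).natDegree :=
          Polynomial.natDegree_prod_le _ _
    _ ≤ ∑ j ∈ Finset.Icc 1 (M - 1), 1 := by
          apply Finset.sum_le_sum; intro j _; rw [Polynomial.natDegree_X_sub_C]
    _ = M - 1 := by rw [Finset.sum_const, smul_eq_mul, mul_one, Nat.card_Icc]; omega
  have heval : ∀ s : ℝ, Q.eval s = ∏ j ∈ Finset.Icc 1 (M - 1), (s - r j) := by
    intro s; rw [hQ, Polynomial.eval_prod]; simp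
  have hsum0 : (∑ x, c x * Q.eval (t x)) = 0 := by
    have hdeg' : Q.natDegree < D + 1 := by omega
    calc ∑ x, c x * Q.eval (t x)
        = ∑ x, ∑ i ∈ Finset.range (D + 1), c x * (Q.coeff i * (t x) ^ i) := by
          apply Finset.sum_congr rfl; intro x _
          rw [Polynomial.eval_eq_sum_range' hdeg', Finset.mul_sum]
      _ = ∑ i ∈ Finset.range (D + 1), ∑ x, c x * (Q.coeff i * (t x) ^ i) := Finset.sum_comm
      _ = ∑ i ∈ Finset.range (D + 1), Q.coeff i * ∑ x, c x * (t x) ^ i := by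
          apply Finset.sum_congr rfl; intro i _
          rw [Finset.mul_sum]; apply Finset.sum_congr rfl; intro x _; ring
      _ = 0 := by
          apply Finset.sum_eq_zero; intro i hi
          rw [horth i (by simp at hi; omega), mul_zero]
  have hQsign : ∀ x, c x ≠ 0 → 0 < Q.eval (t x) * (-1 : ℝ) ^ (M - altLen c x) := by
    intro x hx
    set lx := altLen c x with hlx
    have hlx1 : 1 ≤ lx := one_le_altLen c x
    have hlxM : lx ≤ M := hlesup x hx
    have hsplit := Finset.prod_filter_mul_prod_filter_not (Finset.Icc 1 (M - 1))
      (fun j => j < lx) (fun j => t x - r j)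
    have hpos1 : 0 < ∏ j ∈ (Finset.Icc 1 (M - 1)).filter (fun j => j < lx), (t x - r j) := by
      apply Finset.prod_pos; intro j hj
      simp only [Finset.mem_filter, Finset.mem_Icc] at hj
      have := (hrprop j hj.1.1 hj.1.2).2 x hx (by omega)
      linarith
    have hset2 : (Finset.Icc 1 (M - 1)).filter (fun j => ¬ j < lx) = Finset.Icc lx (M - 1) := by
      ext j; simp only [Finset.mem_filter, Finset.mem_Icc]; omega
    have hcard2 : ((Finset.Icc 1 (M - 1)).filter (fun j => ¬ j < lx)).card = M - lx := by
      rw [hset2, Nat.card_Icc]; omega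
    have hneg2 : ∏ j ∈ (Finset.Icc 1 (M - 1)).filter (fun j => ¬ j < lx), (t x - r j)
        = (-1 : ℝ) ^ (M - lx) * ∏ j ∈ (Finset.Icc 1 (M - 1)).filter (fun j => ¬ j < lx), (r j - t x) := by
      rw [← hcard2, ← Finset.prod_const (-1 : ℝ), ← Finset.prod_mul_distrib]
      apply Finset.prod_congr rfl; intro j _; ring
    have hpos2 : 0 < ∏ j ∈ (Finset.Icc 1 (M - 1)).filter (fun j => ¬ j < lx), (r j - t x) := by
      apply Finset.prod_pos; intro j hj
      rw [hset2] at hj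
      simp only [Finset.mem_Icc] at hj
      have := (hrprop j (by omega) hj.2).1 x hx (by omega)
      linarith
    have hsq : ((-1 : ℝ) ^ (M - lx)) * ((-1 : ℝ) ^ (M - lx)) = 1 := by
      rw [← mul_pow]; norm_num
    rw [heval, ← hsplit, hneg2]
    calc (0:ℝ) < (∏ j ∈ (Finset.Icc 1 (M - 1)).filter (fun j => j < lx), (t x - r j)) *
            (∏ j ∈ (Finset.Icc 1 (M - 1)).filter (fun j => ¬ j < lx), (r j - t x)) :=
          mul_pos hpos1 hpos2
      _ = (∏ j ∈ (Finset.Icc 1 (M - 1)).filter (fun j => j < lx), (t x - r j)) *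
            ((-1:ℝ) ^ (M - lx) * ∏ j ∈ (Finset.Icc 1 (M - 1)).filter (fun j => ¬ j < lx), (r j - t x)) *
            (-1:ℝ) ^ (M - lx) := by
          rw [mul_assoc, mul_assoc]
          congr 1
          rw [mul_comm ((-1:ℝ) ^ (M - lx)) _, mul_assoc, hsq, mul_one]
  -- final contradiction
  have hTT : ∀ x, c x ≠ 0 → 0 < (c x * Q.eval (t x)) * (c a * Q.eval (t a)) := by
    intro x hx
    have h1 := altLen_parity' hx ha
    have h2 := hQsign x hx
    have h3 := hQsign a ha
    have hprod := mul_pos (mul_pos h1 h2) h3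
    have hexp : altLen c x + altLen c a + ((M - altLen c x) + (M - altLen c a)) = 2 * M := by
      have := hlesup x hx; have := hlesup a ha; omega
    have hone : (-1:ℝ) ^ (altLen c x + altLen c a) * ((-1:ℝ) ^ (M - altLen c x) *
        (-1:ℝ) ^ (M - altLen c a)) = 1 := by
      rw [← pow_add, ← pow_add, hexp, pow_mul]; norm_num
    calc (0:ℝ) < (c x * c a * (-1:ℝ) ^ (altLen c x + altLen c a)) *
          (Q.eval (t x) * (-1:ℝ) ^ (M - altLen c x)) * (Q.eval (t a) * (-1:ℝ) ^ (M - altLen c a)) :=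
          hprod
      _ = ((c x * Q.eval (t x)) * (c a * Q.eval (t a))) *
          ((-1:ℝ) ^ (altLen c x + altLen c a) * ((-1:ℝ) ^ (M - altLen c x) *
            (-1:ℝ) ^ (M - altLen c a))) := by ring
      _ = (c x * Q.eval (t x)) * (c a * Q.eval (t a)) := by rw [hone, mul_one]
  have hzero : ∑ x, (c x * Q.eval (t x)) * (c a * Q.eval (t a)) = 0 := by
    rw [← Finset.sum_mul, hsum0, zero_mul]
  have hpos : 0 < ∑ x, (c x * Q.eval (t x)) * (c a * Q.eval (t a)) := by
    apply Finset.sum_pos'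
    · intro x _
      by_cases hx : c x = 0
      · simp [hx]
      · exact le_of_lt (hTT x hx)
    · exact ⟨a, Finset.mem_univ a, hTT a ha⟩
  linarith

lemma exists_alternating {n D : ℕ} (t : Fin n → ℝ) (ht : StrictMono t) (c : Fin n → ℝ)
    (horth : ∀ j ≤ D, ∑ x, c x * (t x) ^ j = 0) (a : Fin n) (ha : c a ≠ 0) :
    ∃ v : Fin (D + 2) → Fin n, StrictMono v ∧ (∃ i, v i = a) ∧ (∀ i, c (v i) ≠ 0) ∧
      (∀ (i : ℕ) (h1 : i < D + 2) (h2 : i + 1 < D + 2),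
        c (v ⟨i, h1⟩) * c (v ⟨i + 1, h2⟩) < 0) := by
  set S := Finset.univ.filter (fun x => c x ≠ 0) with hS
  set M := S.sup (altLen c) with hMdef
  have hM : D + 2 ≤ M := sup_altLen_ge t ht c horth a ha
  have hsa : a ∈ S := by simp [hS, ha]
  have hla1 : 1 ≤ altLen c a := one_le_altLen c a
  have hlaM : altLen c a ≤ M := Finset.le_sup hsa
  obtain ⟨xM, hxM, hMeq⟩ := Finset.exists_mem_eq_sup S ⟨a, hsa⟩ (altLen c)
  have hxM0 : c xM ≠ 0 := by
    have := Finset.mem_filter.mp hxM; exact this.2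
  have hlevel : ∀ j, 1 ≤ j → j ≤ M →
      ∃ y, c y ≠ 0 ∧ altLen c y = j ∧ (j = altLen c a → y = a) := by
    intro j h1 h2
    by_cases hj : j = altLen c a
    · exact ⟨a, ha, hj.symm, fun _ => rfl⟩
    · obtain ⟨y, hy0, hylen⟩ := exists_altLen_level M xM hxM0 hMeq.symm j h1 h2
      exact ⟨y, hy0, hylen, fun h => absurd h hj⟩
  choose rep hrep0 hreplen hrepa using hlevel
  set l := min (altLen c a - 1) (M - (D + 2)) with hl
  have hb1 : ∀ i : ℕ, 1 ≤ l + 1 + i := by intro i; omega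
  have hb2 : ∀ i : ℕ, i < D + 2 → l + 1 + i ≤ M := by intro i hi; omega
  set v : Fin (D + 2) → Fin n := fun i => rep (l + 1 + i.1) (hb1 i.1) (hb2 i.1 i.2) with hv
  have hv0 : ∀ i, c (v i) ≠ 0 := fun i => hrep0 _ _ _
  have hvlen : ∀ i : Fin (D + 2), altLen c (v i) = l + 1 + i.1 := fun i => hreplen _ _ _
  refine ⟨v, ?_, ?_, hv0, ?_⟩
  · intro i j hij
    apply lt_of_altLen_lt (hv0 i) (hv0 j)
    rw [hvlen, hvlen]
    have : i.1 < j.1 := hij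
    omega
  · have hidx : altLen c a - 1 - l < D + 2 := by omega
    refine ⟨⟨altLen c a - 1 - l, hidx⟩, ?_⟩
    apply hrepa
    simp only []
    omega
  · intro i h1 h2
    have hpar := altLen_parity 1 (v ⟨i, h1⟩) (v ⟨i + 1, h2⟩) (hv0 _) (hv0 _)
      (by rw [hvlen, hvlen]; simp only [Fin.val_mk]; omega)
    rw [pow_one] at hpar
    nlinarith

lemma vandermonde_dependence (D : ℕ) (u : Fin (D + 2) → ℝ) (hu : StrictMono u) :
    ∃ W : Fin (D + 2) → ℝ, (∀ i, 0 < W i) ∧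
      ∀ j ≤ D, ∑ i : Fin (D + 2), (-1 : ℝ) ^ (i.1) * W i * u i ^ j = 0 := by
  set W : Fin (D + 2) → ℝ := fun i => (Matrix.vandermonde (u ∘ i.succAbove)).det with hW
  have hWpos : ∀ i, 0 < W i := by
    intro i
    rw [hW]
    simp only []
    rw [Matrix.det_vandermonde]
    apply Finset.prod_pos; intro p _
    apply Finset.prod_pos; intro q hq
    have hpq : p < q := Finset.mem_Ioi.mp hq
    have := hu ((Fin.strictMono_succAbove i) hpq)
    simp only [Function.comp_apply]
    linarith
  refine ⟨W, hWpos, ?_⟩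
  intro j hj
  set M : Matrix (Fin (D + 2)) (Fin (D + 2)) ℝ :=
    fun p q => u p ^ (if q = Fin.last (D + 1) then j else (q : ℕ)) with hM
  have hjlt : j < D + 1 := by omega
  have hdet0 : M.det = 0 := by
    apply Matrix.det_zero_of_column_eq (i := (⟨j, by omega⟩ : Fin (D + 2)))
      (j := Fin.last (D + 1))
    · intro h
      have := congrArg Fin.val h
      simp [Fin.val_last] at this
      omega
    · intro k
      simp [hM, Fin.ext_iff, Fin.val_last]
  have hsub : ∀ i : Fin (D + 2),
      (M.submatrix i.succAbove (Fin.last (D + 1)).succAbove).det = W i := by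
    intro i
    congr 1
    ext r s
    rw [Matrix.submatrix_apply, Fin.succAbove_last]
    simp only [hM, Matrix.vandermonde_apply]
    rw [if_neg]
    · simp [Fin.coe_castSucc]
    · intro h
      exact absurd (congrArg Fin.val h) (by simp [Fin.val_last]; omega)
  have hMl : ∀ i, M i (Fin.last (D + 1)) = u i ^ j := by
    intro i; simp [hM]
  have hexp := Matrix.det_succ_column M (Fin.last (D + 1))
  rw [hdet0] at hexp
  have key : ∑ i : Fin (D + 2), (-1 : ℝ) ^ (i.1) * W i * u i ^ j
      = (-1 : ℝ) ^ (D + 1) * ∑ i : Fin (D + 2), (-1 : ℝ) ^ ((i : ℕ) + ((Fin.last (D + 1) : Fin (D+2)) : ℕ)) *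
          M i (Fin.last (D + 1)) * (M.submatrix i.succAbove (Fin.last (D + 1)).succAbove).det := by
    rw [Finset.mul_sum]
    apply Finset.sum_congr rfl
    intro i _
    rw [hMl, hsub, Fin.val_last]
    rw [← mul_assoc, ← mul_assoc, ← pow_add]
    have he : D + 1 + ((i : ℕ) + (D + 1)) = 2 * (D + 1) + (i : ℕ) := by omega
    rw [he, pow_add, pow_mul, neg_one_sq, one_pow, one_mul]
    ring
  rw [key, ← hexp, mul_zero]

lemma mem_mcConv_s15 {d n : ℕ} {t : Fin n → ℝ} (σ : Finset (Fin n)) (x : Fin d → ℝ) :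
    x ∈ mcConv d t σ ↔ ∃ w : Fin n → ℝ, (∀ i, 0 ≤ w i) ∧ (∀ i, i ∉ σ → w i = 0) ∧
      ∑ i, w i = 1 ∧ ∑ i, w i • momentCurve d (t i) = x := by
  classical
  constructor
  · intro hx
    rw [mcConv, _root_.convexHull_eq] at hx
    obtain ⟨ι, s, w', z, hw0, hw1, hz, hcm⟩ := hx
    have hsne : s.Nonempty := by
      by_contra h
      rw [Finset.not_nonempty_iff_eq_empty] at h
      rw [h] at hw1; simp at hw1
    obtain ⟨i0, hi0⟩ := hsne
    obtain ⟨b0, hb0, -⟩ := hz i0 hi0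
    haveI : Nonempty (Fin n) := ⟨b0⟩
    set g : ι → Fin n := fun i =>
      if h : ∃ b : Fin n, b ∈ σ ∧ momentCurve d (t b) = z i then h.choose
      else Classical.arbitrary (Fin n) with hg
    have hgσ : ∀ i ∈ s, g i ∈ σ ∧ momentCurve d (t (g i)) = z i := by
      intro i hi
      obtain ⟨b, hb, hbe⟩ := hz i hi
      have hex : ∃ b : Fin n, b ∈ σ ∧ momentCurve d (t b) = z i := ⟨b, by simpa using hb, hbe⟩
      rw [hg]; simp only [dif_pos hex]
      exact hex.choose_spec
    refine ⟨fun b => ∑ i ∈ s.filter (fun i => g i = b), w' i, ?_, ?_, ?_, ?_⟩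
    · intro b
      apply Finset.sum_nonneg
      intro i hi
      exact hw0 i (Finset.mem_filter.mp hi).1
    · intro b hb
      apply Finset.sum_eq_zero
      intro i hi
      obtain ⟨his, hgi⟩ := Finset.mem_filter.mp hi
      exact absurd (hgi ▸ (hgσ i his).1) hb
    · rw [Finset.sum_fiberwise_of_maps_to (fun i _ => Finset.mem_univ (g i)) w']
      exact hw1
    · rw [← hcm]
      calc ∑ b, (∑ i ∈ s.filter (fun i => g i = b), w' i) • momentCurve d (t b)
          = ∑ b ∈ Finset.univ, ∑ i ∈ s.filter (fun i => g i = b), w' i • z i := by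
            apply Finset.sum_congr rfl
            intro b _
            rw [Finset.sum_smul]
            apply Finset.sum_congr rfl
            intro i hi
            obtain ⟨his, hgi⟩ := Finset.mem_filter.mp hi
            rw [← hgi, (hgσ i his).2]
        _ = ∑ i ∈ s, w' i • z i :=
            Finset.sum_fiberwise_of_maps_to (fun i _ => Finset.mem_univ (g i)) _
        _ = s.centerMass w' z := (Finset.centerMass_eq_of_sum_1 _ z hw1).symm
  · rintro ⟨w, h0, hs, h1, hp⟩
    rw [mcConv]
    have hσsum : ∑ i ∈ σ, w i = 1 := by
      rw [← h1]
      exact (Finset.sum_subset (Finset.subset_univ σ) (fun i _ hi => hs i hi))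
    have hmem := Finset.centerMass_mem_convexHull (t := σ) (w := w)
      (fun i _ => h0 i) (by rw [hσsum]; norm_num)
      (fun i hi => Set.mem_image_of_mem (fun i => momentCurve d (t i)) (Finset.mem_coe.mpr hi))
    have heq : σ.centerMass w (fun i => momentCurve d (t i)) = x := by
      rw [Finset.centerMass_eq_of_sum_1 _ _ hσsum, ← hp]
      exact (Finset.sum_subset (Finset.subset_univ σ)
        (fun i _ hi => by rw [hs i hi, zero_smul]))
    rwa [heq] at hmem

lemma reps_orth {d n : ℕ} (t : Fin n → ℝ) (w w' : Fin n → ℝ)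
    (h1 : ∑ i, w i = 1) (h1' : ∑ i, w' i = 1)
    (hp : ∑ i, w i • momentCurve d (t i) = ∑ i, w' i • momentCurve d (t i)) :
    ∀ j ≤ d, ∑ i, (w i - w' i) * (t i) ^ j = 0 := by
  intro j hj
  rw [Finset.sum_congr rfl (fun i _ => sub_mul (w i) (w' i) ((t i)^j)),
    Finset.sum_sub_distrib]
  rcases Nat.eq_zero_or_pos j with h0 | hpos
  · subst h0
    simp only [pow_zero, mul_one]
    rw [h1, h1', sub_self]
  · have hj' : j - 1 < d := by omega
    have hcoord := congrFun hp ⟨j - 1, hj'⟩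
    rw [Finset.sum_apply, Finset.sum_apply] at hcoord
    have hmc : ∀ i, (w i • momentCurve d (t i)) ⟨j - 1, hj'⟩ = w i * (t i) ^ j := by
      intro i
      rw [Pi.smul_apply, smul_eq_mul, momentCurve]
      congr 2
      simp only [Fin.val_mk]
      omega
    have hmc' : ∀ i, (w' i • momentCurve d (t i)) ⟨j - 1, hj'⟩ = w' i * (t i) ^ j := by
      intro i
      rw [Pi.smul_apply, smul_eq_mul, momentCurve]
      congr 2
      simp only [Fin.val_mk]
      omega
    rw [Finset.sum_congr rfl (fun i _ => hmc i), Finset.sum_congr rfl (fun i _ => hmc' i)]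
      at hcoord
    rw [hcoord, sub_self]

lemma neg_one_cases (N : ℕ) : ((-1:ℝ))^N = 1 ∨ ((-1:ℝ))^N = -1 := by
  rcases Nat.even_or_odd N with h | h
  · exact Or.inl h.neg_one_pow
  · exact Or.inr h.neg_one_pow

lemma parity_of_neg_one_pow {a b : ℕ} (h : ((-1:ℝ))^a = (-1:ℝ)^b) : a % 2 = b % 2 := by
  rcases Nat.even_or_odd a with ha | ha <;> rcases Nat.even_or_odd b with hb | hb
  · obtain ⟨x, hx⟩ := ha; obtain ⟨y, hy⟩ := hb; omega
  · rw [ha.neg_one_pow, hb.neg_one_pow] at h; norm_num at h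
  · rw [ha.neg_one_pow, hb.neg_one_pow] at h; norm_num at h
  · obtain ⟨x, hx⟩ := ha; obtain ⟨y, hy⟩ := hb; omega

lemma alt_sign {m : ℕ} (g : Fin m → ℝ) (hne : ∀ i, g i ≠ 0)
    (halt : ∀ (i : ℕ) (h1 : i < m) (h2 : i + 1 < m), g ⟨i, h1⟩ * g ⟨i + 1, h2⟩ < 0) :
    ∀ i j : Fin m, 0 < g i * g j * (-1 : ℝ) ^ (i.1 + j.1) := by
  have aux : ∀ (i : ℕ) (h : i < m), 0 < g ⟨i, h⟩ * g ⟨0, by omega⟩ * (-1:ℝ)^i := by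
    intro i
    induction i with
    | zero => intro h; simpa using mul_self_pos.mpr (hne ⟨0, h⟩)
    | succ i ih =>
      intro h
      have h1 : i < m := by omega
      have hi := ih h1
      have hs := halt i h1 h
      have hsq := mul_self_pos.mpr (hne ⟨i, h1⟩)
      have hpow : ((-1:ℝ))^(i+1) = (-1)^i * (-1) := by ring
      rw [hpow]
      nlinarith [mul_pos hi (neg_pos.mpr hs)]
  intro i j
  have hi := aux i.1 i.2
  have hj := aux j.1 j.2
  have hm : 0 < m := i.pos
  have hsq := mul_self_pos.mpr (hne ⟨0, hm⟩)
  have hpow : ((-1:ℝ))^(i.1 + j.1) = (-1)^(i.1) * (-1)^(j.1) := pow_add _ _ _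
  rw [hpow]
  nlinarith [mul_pos hi hj]

lemma fiber_weights {m n : ℕ} (E : Finset (Fin m)) (v : Fin m → Fin n) (W : Fin m → ℝ)
    (hW : ∀ i, 0 < W i) (hCE : 0 < ∑ i ∈ E, W i) :
    (∀ b, 0 ≤ (∑ i ∈ E.filter (fun i => v i = b), W i) / (∑ i ∈ E, W i)) ∧
    (∀ b, (∀ i ∈ E, v i ≠ b) → (∑ i ∈ E.filter (fun i => v i = b), W i) / (∑ i ∈ E, W i) = 0) ∧
    (∑ b, (∑ i ∈ E.filter (fun i => v i = b), W i) / (∑ i ∈ E, W i) = 1) ∧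
    (∀ b, (∃ i ∈ E, v i = b) → 0 < (∑ i ∈ E.filter (fun i => v i = b), W i) / (∑ i ∈ E, W i)) := by
  classical
  refine ⟨?_, ?_, ?_, ?_⟩
  · intro b
    apply div_nonneg _ hCE.le
    exact Finset.sum_nonneg (fun i _ => (hW i).le)
  · intro b hb
    rw [div_eq_zero_iff]
    left
    apply Finset.sum_eq_zero
    intro i hi
    obtain ⟨hiE, hvi⟩ := Finset.mem_filter.mp hi
    exact absurd hvi (hb i hiE)
  · rw [← Finset.sum_div]
    rw [Finset.sum_fiberwise_of_maps_to (fun i _ => Finset.mem_univ (v i)) W]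
    exact div_self (ne_of_gt hCE)
  · intro b ⟨i, hiE, hvi⟩
    apply div_pos _ hCE
    apply Finset.sum_pos (fun j _ => hW j)
    exact ⟨i, Finset.mem_filter.mpr ⟨hiE, hvi⟩⟩

lemma fiber_weights_smul {m n d : ℕ} (E : Finset (Fin m)) (v : Fin m → Fin n) (W : Fin m → ℝ)
    (f : Fin n → (Fin d → ℝ)) :
    ∑ b, ((∑ i ∈ E.filter (fun i => v i = b), W i) / (∑ i ∈ E, W i)) • f b
      = (∑ i ∈ E, W i)⁻¹ • ∑ i ∈ E, W i • f (v i) := by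
  classical
  calc ∑ b, ((∑ i ∈ E.filter (fun i => v i = b), W i) / (∑ i ∈ E, W i)) • f b
      = ∑ b, ∑ i ∈ E.filter (fun i => v i = b), ((∑ i ∈ E, W i)⁻¹ * W i) • f (v i) := by
        apply Finset.sum_congr rfl
        intro b _
        rw [div_eq_inv_mul, Finset.mul_sum, Finset.sum_smul]
        apply Finset.sum_congr rfl
        intro i hi
        rw [(Finset.mem_filter.mp hi).2]
    _ = ∑ i ∈ E, ((∑ i ∈ E, W i)⁻¹ * W i) • f (v i) :=
        Finset.sum_fiberwise_of_maps_to (fun i _ => Finset.mem_univ (v i)) _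
    _ = (∑ i ∈ E, W i)⁻¹ • ∑ i ∈ E, W i • f (v i) := by
        rw [Finset.smul_sum]
        apply Finset.sum_congr rfl
        intro i _
        rw [smul_smul]

set_option maxHeartbeats 1000000 in
/-- **Proposition (skeleton forces membership).** If a triangulation `T` of `conv(A)`
with vertex set `A` (here `A` is an `n`-point set on `γ_D`, `n ≥ D + 1`) contains every
`⌈D/2⌉`-dimensional face of a `k`-simplex `σ` with `⌈D/2⌉ ≤ k ≤ D`, then `σ` itself is a
face of `T`. -/
theorem skeleton_in_triangulation_implies_face
    (D n k : ℕ) (hn : D + 1 ≤ n) (t : Fin n → ℝ) (ht : StrictMono t)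
    (T : Finset (Finset (Fin n)))
    (hT : IsTriangulation D t Finset.univ T) (hTV : UsesAllVertices Finset.univ T)
    (σ : Finset (Fin n)) (hσ : σ.card = k + 1)
    (hk1 : (D + 1) / 2 ≤ k) (hk2 : k ≤ D)
    (hskel : ∀ τ ⊆ σ, τ.card = (D + 1) / 2 + 1 → IsFaceOf τ T) :
    IsFaceOf σ T := by
  classical
  by_cases hkm : k = (D + 1) / 2
  · exact hskel σ (Finset.Subset.refl σ) (by rw [hσ, hkm])
  obtain ⟨hTcard, hTnolap, hTcover⟩ := hT
  set f : Fin n → (Fin D → ℝ) := fun i => momentCurve D (t i) with hf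
  set μ : Fin n → ℝ := fun i => if i ∈ σ then ((k : ℝ) + 1)⁻¹ else 0 with hμ
  have hkpos : (0:ℝ) < (k:ℝ) + 1 := by positivity
  have hμ0 : ∀ i, 0 ≤ μ i := by
    intro i
    by_cases h : i ∈ σ
    · rw [hμ]; simp only [h, if_true]; positivity
    · simp [hμ, h]
  have hμs : ∀ i, i ∉ σ → μ i = 0 := by intro i hi; simp [hμ, hi]
  have hμ1 : (∑ i, μ i) = 1 := by
    simp only [hμ]
    rw [Finset.sum_ite_mem, Finset.univ_inter, Finset.sum_const, hσ, nsmul_eq_mul]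
    push_cast
    field_simp
  set p : Fin D → ℝ := ∑ i, μ i • f i with hp
  have hpσ : p ∈ mcConv D t σ := (mem_mcConv_s15 σ p).mpr ⟨μ, hμ0, hμs, hμ1, rfl⟩
  have hpuniv : p ∈ mcConv D t Finset.univ := by
    apply convexHull_mono (Set.image_mono ?_) hpσ
    intro x _; simp
  obtain ⟨τ, hτT, hpτ⟩ := hTcover p hpuniv
  obtain ⟨hτcard, -⟩ := hTcard τ hτT
  by_cases hστ : σ ⊆ τ
  · exact ⟨τ, hτT, hστ⟩
  exfalso
  obtain ⟨a, haσ, haτ⟩ := Finset.not_subset.mp hστ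
  obtain ⟨lam, hl0, hls, hl1, hlp⟩ := (mem_mcConv_s15 τ p).mp hpτ
  set c : Fin n → ℝ := fun i => μ i - lam i with hc
  have horth : ∀ j ≤ D, ∑ x, c x * (t x) ^ j = 0 := by
    intro j hj
    exact reps_orth t μ lam hμ1 hl1 ((rfl : ∑ i, μ i • momentCurve D (t i) = p).trans hlp.symm) j hj
  have hca : 0 < c a := by
    have hμa : μ a = ((k:ℝ) + 1)⁻¹ := by simp [hμ, haσ]
    rw [hc]
    dsimp only
    rw [hμa, hls a haτ, sub_zero]
    positivity
  obtain ⟨v, hvmono, ⟨i₀, hvi₀⟩, hv0, hvalt⟩ := exists_alternating t ht c horth a (ne_of_gt hca)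
  have hsign := alt_sign (fun i => c (v i)) hv0 hvalt
  set ε : ℝ := (-1:ℝ)^(i₀.1) with hε
  have hεor : ε = 1 ∨ ε = -1 := neg_one_cases i₀.1
  have hεne : ε ≠ 0 := by rcases hεor with h|h <;> rw [h] <;> norm_num
  have hcvi₀ : 0 < c (v i₀) := by rw [hvi₀]; exact hca
  set E : Finset (Fin (D + 2)) := Finset.univ.filter (fun i => 0 < c (v i)) with hE
  have hEmem : ∀ i, i ∈ E ↔ 0 < c (v i) := by intro i; simp [hE]
  have hEi₀ : i₀ ∈ E := (hEmem i₀).mpr hcvi₀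
  have hOneg : ∀ i, i ∉ E → c (v i) < 0 := by
    intro i hi
    rcases lt_trichotomy (c (v i)) 0 with h|h|h
    · exact h
    · exact absurd h (hv0 i)
    · exact absurd ((hEmem i).mpr h) hi
  have hE1 : ∀ i ∈ E, ((-1:ℝ))^(i.1) = ε := by
    intro i hi
    have hp1 := hsign i i₀
    have hcvi := (hEmem i).mp hi
    rw [pow_add, ← hε] at hp1
    rcases neg_one_cases i.1 with h1 | h1 <;> rcases hεor with h2 | h2 <;>
      rw [h1, h2] at hp1 ⊢
    · exfalso; norm_num at hp1; linarith [mul_pos hcvi hcvi₀]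
    · exfalso; norm_num at hp1; linarith [mul_pos hcvi hcvi₀]
  have hE2 : ∀ i, i ∉ E → ((-1:ℝ))^(i.1) = -ε := by
    intro i hi
    have hp1 := hsign i i₀
    have hcvi := hOneg i hi
    rw [pow_add, ← hε] at hp1
    rcases neg_one_cases i.1 with h1 | h1 <;> rcases hεor with h2 | h2 <;>
      rw [h1, h2] at hp1 ⊢
    · exfalso; norm_num at hp1; linarith [mul_neg_of_neg_of_pos hcvi hcvi₀]
    · norm_num
    · exfalso; norm_num at hp1; linarith [mul_neg_of_neg_of_pos hcvi hcvi₀]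
  obtain ⟨W, hWpos, hWorth⟩ := vandermonde_dependence D (t ∘ v) (ht.comp hvmono)
  set O : Finset (Fin (D + 2)) := Finset.univ.filter (fun i => ¬ (i ∈ E)) with hO
  have hEfilter : Finset.univ.filter (fun i : Fin (D + 2) => i ∈ E) = E := by
    ext i; simp
  have hEO : ∀ j ≤ D, ∑ i ∈ E, W i * (t (v i)) ^ j = ∑ i ∈ O, W i * (t (v i)) ^ j := by
    intro j hj
    have h0 := hWorth j hj
    rw [← Finset.sum_filter_add_sum_filter_not Finset.univ (fun i => i ∈ E)] at h0
    rw [hEfilter, ← hO] at h0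
    have hA : ∑ i ∈ E, (-1:ℝ)^(i.1) * W i * (t ∘ v) i ^ j
        = ε * ∑ i ∈ E, W i * (t (v i)) ^ j := by
      rw [Finset.mul_sum]
      apply Finset.sum_congr rfl
      intro i hi
      rw [hE1 i hi, Function.comp_apply]
      ring
    have hB : ∑ i ∈ O, (-1:ℝ)^(i.1) * W i * (t ∘ v) i ^ j
        = -ε * ∑ i ∈ O, W i * (t (v i)) ^ j := by
      rw [Finset.mul_sum]
      apply Finset.sum_congr rfl
      intro i hi
      have hiO : i ∉ E := by
        have := Finset.mem_filter.mp (hO ▸ hi)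
        exact this.2
      rw [hE2 i hiO, Function.comp_apply]
      ring
    rw [hA, hB] at h0
    have h1 : ε * (∑ i ∈ E, W i * (t (v i)) ^ j - ∑ i ∈ O, W i * (t (v i)) ^ j) = 0 := by
      linear_combination h0
    rcases mul_eq_zero.mp h1 with h | h
    · exact absurd h hεne
    · linarith
  set CE := ∑ i ∈ E, W i with hCE
  set CO := ∑ i ∈ O, W i with hCO
  have hCEO : CE = CO := by
    have := hEO 0 (Nat.zero_le D)
    simpa [pow_zero] using this
  have htot : 0 < ∑ i, W i := Finset.sum_pos (fun i _ => hWpos i) Finset.univ_nonempty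
  have hsplitW : CE + CO = ∑ i, W i := by
    have h := Finset.sum_filter_add_sum_filter_not Finset.univ (fun i => i ∈ E) W
    rw [hEfilter] at h
    exact h
  have hCEpos : 0 < CE := by linarith
  have hCOpos : 0 < CO := by linarith
  set wq : Fin n → ℝ := fun b => (∑ i ∈ E.filter (fun i => v i = b), W i) / CE with hwq
  set wo : Fin n → ℝ := fun b => (∑ i ∈ O.filter (fun i => v i = b), W i) / CO with hwo
  obtain ⟨hq0, hqz, hq1, hqpos⟩ := fiber_weights E v W hWpos hCEpos
  obtain ⟨ho0, hoz, ho1, hopos⟩ := fiber_weights O v W hWpos hCOpos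
  set q : Fin D → ℝ := ∑ b, wq b • f b with hq
  have hEOf : ∑ i ∈ E, W i • f (v i) = ∑ i ∈ O, W i • f (v i) := by
    funext x
    rw [Finset.sum_apply, Finset.sum_apply]
    have hx : x.1 + 1 ≤ D := x.2
    have hid := hEO (x.1 + 1) hx
    calc ∑ i ∈ E, (W i • f (v i)) x = ∑ i ∈ E, W i * (t (v i)) ^ (x.1 + 1) := by
          apply Finset.sum_congr rfl; intro i _
          rw [Pi.smul_apply, smul_eq_mul]; rfl
      _ = ∑ i ∈ O, W i * (t (v i)) ^ (x.1 + 1) := hid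
      _ = ∑ i ∈ O, (W i • f (v i)) x := by
          apply Finset.sum_congr rfl; intro i _
          rw [Pi.smul_apply, smul_eq_mul]; rfl
  have hq2 : q = ∑ b, wo b • f b := by
    rw [hq]
    simp only [hwq, hwo]
    rw [fiber_weights_smul E v W f, fiber_weights_smul O v W f, hEOf, ← hCE, ← hCO, hCEO]
  set P₀ : Finset (Fin n) := E.image v with hP₀
  have hP₀σ : P₀ ⊆ σ := by
    intro b hb
    obtain ⟨i, hiE, hvib⟩ := Finset.mem_image.mp hb
    have hpos := (hEmem i).mp hiE
    by_contra hbσ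
    have hμb : μ b = 0 := hμs b hbσ
    have hlb := hl0 b
    rw [hc] at hpos
    dsimp only at hpos
    rw [hvib, hμb] at hpos
    linarith
  have hEcard : E.card ≤ (D + 1) / 2 + 1 := by
    have hinj : Set.InjOn (fun i : Fin (D + 2) => i.1 / 2) ↑E := by
      intro i hi j hj hij
      have h1 := hE1 i (Finset.mem_coe.mp hi)
      have h2 := hE1 j (Finset.mem_coe.mp hj)
      have hpar := parity_of_neg_one_pow (h1.trans h2.symm)
      simp only at hij
      exact Fin.ext (by omega)
    have hmaps : ∀ i ∈ E, i.1 / 2 ∈ Finset.range ((D + 1) / 2 + 1) := by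
      intro i _
      rw [Finset.mem_range]
      have := i.2
      omega
    have := Finset.card_le_card_of_injOn _ hmaps hinj
    simpa using this
  have hP₀card : P₀.card ≤ (D + 1) / 2 + 1 := le_trans Finset.card_image_le hEcard
  obtain ⟨σ₀, hP₀σ₀, hσ₀σ, hσ₀card⟩ :=
    Finset.exists_subsuperset_card_eq hP₀σ hP₀card (by rw [hσ]; omega)
  obtain ⟨ρ, hρT, hσ₀ρ⟩ := hskel σ₀ hσ₀σ hσ₀card
  obtain ⟨hρcard, -⟩ := hTcard ρ hρT
  have haP₀ : a ∈ P₀ := Finset.mem_image.mpr ⟨i₀, hEi₀, hvi₀⟩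
  have haρ : a ∈ ρ := hσ₀ρ (hP₀σ₀ haP₀)
  have hρτ : ρ ≠ τ := fun h => haτ (h ▸ haρ)
  have hsub : mcConv D t ρ ∩ mcConv D t τ ⊆ mcConv D t (ρ ∩ τ) :=
    not_not.mp (hTnolap ρ hρT τ hτT hρτ)
  have hP₀ρ : ∀ b, b ∉ ρ → ∀ i ∈ E, v i ≠ b := by
    intro b hbρ i hiE hvib
    exact hbρ (hσ₀ρ (hP₀σ₀ (Finset.mem_image.mpr ⟨i, hiE, hvib⟩)))
  have hqρ : q ∈ mcConv D t ρ :=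
    (mem_mcConv_s15 ρ q).mpr ⟨wq, hq0, fun b hb => hqz b (hP₀ρ b hb), hq1, rfl⟩
  have hqτ : q ∈ mcConv D t τ := by
    apply (mem_mcConv_s15 τ q).mpr
    refine ⟨wo, ho0, ?_, ho1, hq2.symm⟩
    intro b hbτ
    apply hoz b
    intro i hiO hvib
    have hiE : i ∉ E := by
      have := Finset.mem_filter.mp (hO ▸ hiO)
      exact this.2
    have hneg := hOneg i hiE
    rw [hc] at hneg
    dsimp only at hneg
    have hlvb : lam (v i) = 0 := by rw [hvib]; exact hls b hbτ
    have := hμ0 (v i)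
    rw [hlvb] at hneg
    linarith
  obtain ⟨w'', h''0, h''s, h''1, h''p⟩ := (mem_mcConv_s15 _ q).mp (hsub ⟨hqρ, hqτ⟩)
  have horth2 : ∀ j ≤ D, ∑ b, (wq b - w'' b) * (t b) ^ j = 0 := by
    intro j hj
    exact reps_orth t wq w'' hq1 h''1
      ((rfl : ∑ b, wq b • momentCurve D (t b) = q).trans h''p.symm) j hj
  rcases eq_or_ne (wq a) (w'' a) with heqa | hnea
  · have hwqa : 0 < wq a := hqpos a ⟨i₀, hEi₀, hvi₀⟩
    have hw''a : w'' a ≠ 0 := by rw [← heqa]; exact ne_of_gt hwqa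
    have haρτ : a ∈ ρ ∩ τ := by
      by_contra h
      exact hw''a (h''s a h)
    exact haτ (Finset.mem_inter.mp haρτ).2
  · obtain ⟨v', hv'mono, -, hv'0, -⟩ :=
      exists_alternating t ht (fun b => wq b - w'' b) horth2 a (sub_ne_zero.mpr hnea)
    have hv'ρ : ∀ i, v' i ∈ ρ := by
      intro i
      have h := hv'0 i
      by_cases hwqv : wq (v' i) = 0
      · have hw'' : w'' (v' i) ≠ 0 := by
          intro h2
          apply h
          show wq (v' i) - w'' (v' i) = 0
          rw [hwqv, h2, sub_zero]
        have hmem : v' i ∈ ρ ∩ τ := by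
          by_contra hh
          exact hw'' (h''s _ hh)
        exact (Finset.mem_inter.mp hmem).1
      · by_contra hh
        exact hwqv (hqz _ (hP₀ρ _ hh))
    have hcard : D + 2 ≤ ρ.card := by
      have himg : Finset.univ.image v' ⊆ ρ := by
        intro b hb
        obtain ⟨i, -, hib⟩ := Finset.mem_image.mp hb
        exact hib ▸ hv'ρ i
      have hle := Finset.card_le_card himg
      rw [Finset.card_image_of_injective _ hv'mono.injective, Finset.card_univ] at hle
      simpa using hle
    omega
end
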